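/- arXiv:1604.01522 — 5 statements merged into one kernel-verified Lean document; each statement's English description precedes it below -/
import Mathlib

section
/- Let f, g : ℝ → ℝ be twice differentiable functions such that the factorable surface z(x,y) = f(x)g(y) satisfies K = H² everywhere, where K = (f''f)(g''g) − (f')²(g')² and H = (f''g + fg'')/2. Then either f' ≡ 0 (f is constant) or g' ≡ 0 (g is constant), assuming f and g are continuous and nonvanishing on some interval where the conclusion is derived; more precisely, if neither f' nor g' vanishes identically, a contradiction results. -/
theorem stmt2 (f g : ℝ → ℝ) (hf : ContDiff ℝ 2 f) (hg : ContDiff ℝ 2 g)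
    (hKH : ∀ x y : ℝ,
      (deriv (deriv f) x * f x) * (deriv (deriv g) y * g y)
          - (deriv f x) ^ 2 * (deriv g y) ^ 2 =
        ((deriv (deriv f) x * g y + f x * deriv (deriv g) y) / 2) ^ 2) :
    (∀ x : ℝ, deriv f x = 0) ∨ (∀ y : ℝ, deriv g y = 0) := by
  by_contra h
  push_neg at h
  obtain ⟨⟨x, hx⟩, ⟨y, hy⟩⟩ := h
  have h1 := hKH x y
  nlinarith [sq_nonneg (deriv (deriv f) x * g y - f x * deriv (deriv g) y),
    mul_pos (mul_self_pos.mpr hx) (mul_self_pos.mpr hy),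
    sq_nonneg (deriv f x * deriv g y)]
end

section
/- Let z : ℝ² → ℝ be a smooth function satisfying (z_xx − z_yy)² + 4(z_xy)² = 0 everywhere (equivalently K = H² where K = z_xx z_yy − z_xy² and H = (z_xx + z_yy)/2). Then there exist constants c, d₁, d₂, d₃ ∈ ℝ such that z(x,y) = c(x² + y²) + d₁x + d₂y + d₃. -/
noncomputable def zxx (z : ℝ → ℝ → ℝ) (x y : ℝ) : ℝ := deriv (fun s => deriv (fun t => z t y) s) x
noncomputable def zyy (z : ℝ → ℝ → ℝ) (x y : ℝ) : ℝ := deriv (fun s => deriv (fun t => z x t) s) y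
noncomputable def zxy (z : ℝ → ℝ → ℝ) (x y : ℝ) : ℝ := deriv (fun t => deriv (fun s => z s t) x) y

/-- A smooth function with constant second derivative is a quadratic polynomial. -/
lemma quad_of_deriv2_const (f : ℝ → ℝ) (hf : ContDiff ℝ (⊤ : ℕ∞) f) (a : ℝ)
    (h2 : ∀ x, deriv (deriv f) x = a) :
    ∀ x, f x = a / 2 * x ^ 2 + deriv f 0 * x + f 0 := by
  have hdf : ContDiff ℝ (⊤ : ℕ∞) (deriv f) := (contDiff_infty_iff_deriv.mp hf).2
  have h1 : ∀ x, deriv f x = a * x + deriv f 0 := by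
    intro x
    have hg : Differentiable ℝ (fun x => deriv f x - a * x) :=
      (hdf.differentiable (by simp)).sub (differentiable_id.const_mul a)
    have hg' : ∀ x, deriv (fun x => deriv f x - a * x) x = 0 := by
      intro x
      have hd : HasDerivAt (deriv f) (deriv (deriv f) x) x :=
        ((hdf.differentiable (by simp)) x).hasDerivAt
      have hl : HasDerivAt (fun x : ℝ => a * x) a x := by
        simpa using (hasDerivAt_id x).const_mul a
      rw [show (fun x => deriv f x - a * x) = deriv f - fun x => a * x from rfl, (hd.sub hl).deriv, h2 x, sub_self]
    have := is_const_of_deriv_eq_zero hg hg' x 0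
    simp at this
    linarith
  have hg : Differentiable ℝ (fun x => f x - (a / 2 * x ^ 2 + deriv f 0 * x)) := by
    apply (hf.differentiable (by simp)).sub
    apply Differentiable.add
    · exact (differentiable_pow 2).const_mul _
    · exact differentiable_id.const_mul _
  have hg' : ∀ x, deriv (fun x => f x - (a / 2 * x ^ 2 + deriv f 0 * x)) x = 0 := by
    intro x
    have h1' : HasDerivAt (fun x : ℝ => a / 2 * x ^ 2 + deriv f 0 * x) (a * x + deriv f 0) x := by
      have : HasDerivAt (fun y : ℝ => a / 2 * y ^ 2 + deriv f 0 * y) (a / 2 * ((2 : ℕ) * x ^ (2 - 1)) + deriv f 0 * 1) x := ((hasDerivAt_pow 2 x).const_mul (a / 2)).add ((hasDerivAt_id x).const_mul (deriv f 0))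
      convert this using 1
      ring
    have hfd : HasDerivAt f (deriv f x) x := ((hf.differentiable (by simp)) x).hasDerivAt
    have := (hfd.sub h1').deriv
    rw [show (fun x => f x - (a / 2 * x ^ 2 + deriv f 0 * x)) = f - fun x => a / 2 * x ^ 2 + deriv f 0 * x from rfl, this, h1 x]
    ring
  intro x
  have := is_const_of_deriv_eq_zero hg hg' x 0
  simp at this
  linarith

theorem stmt3 (z : ℝ → ℝ → ℝ)
    (hz : ContDiff ℝ (⊤ : ℕ∞) (fun p : ℝ × ℝ => z p.1 p.2))
    (h : ∀ x y : ℝ, (zxx z x y - zyy z x y) ^ 2 + 4 * (zxy z x y) ^ 2 = 0) :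
    ∃ c d₁ d₂ d₃ : ℝ, ∀ x y : ℝ,
      z x y = c * (x ^ 2 + y ^ 2) + d₁ * x + d₂ * y + d₃ := by
  set Z : ℝ × ℝ → ℝ := fun p => z p.1 p.2 with hZ
  have hz' : ContDiff ℝ (⊤ : ℕ∞) Z := hz.of_le (by simp)
  set D : ℝ × ℝ → (ℝ × ℝ) →L[ℝ] ℝ := fun p => fderiv ℝ Z p with hD
  have hDsmooth : ContDiff ℝ (⊤ : ℕ∞) D := (contDiff_infty_iff_fderiv.mp hz').2
  -- partial derivatives as fderiv applications
  have hx : ∀ x y : ℝ, HasDerivAt (fun s => z s y) (D (x, y) (1, 0)) x := by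
    intro x y
    have hcurve : HasDerivAt (fun s : ℝ => ((s, y) : ℝ × ℝ)) (1, 0) x :=
      (hasDerivAt_id x).prodMk (hasDerivAt_const x y)
    exact ((hz'.differentiable (by simp) (x, y)).hasFDerivAt).comp_hasDerivAt x hcurve
  have hy : ∀ x y : ℝ, HasDerivAt (fun t => z x t) (D (x, y) (0, 1)) y := by
    intro x y
    have hcurve : HasDerivAt (fun t : ℝ => ((x, t) : ℝ × ℝ)) (0, 1) y :=
      (hasDerivAt_const y x).prodMk (hasDerivAt_id y)
    exact ((hz'.differentiable (by simp) (x, y)).hasFDerivAt).comp_hasDerivAt y hcurve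
  -- from h : zxy = 0 and zxx = zyy everywhere
  have hsplit : ∀ x y : ℝ, zxy z x y = 0 ∧ zxx z x y = zyy z x y := by
    intro x y
    have := h x y
    constructor
    · nlinarith [sq_nonneg (zxx z x y - zyy z x y), sq_nonneg (zxy z x y)]
    · nlinarith [sq_nonneg (zxx z x y - zyy z x y), sq_nonneg (zxy z x y)]
  -- zxy z x y = deriv (fun t => D (x,t) (1,0)) y
  have hzxy : ∀ x y : ℝ, zxy z x y = deriv (fun t => D (x, t) (1, 0)) y := by
    intro x y
    unfold zxy
    congr 1
    funext t
    exact (hx x t).deriv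
  have hDdiff : ∀ x : ℝ, Differentiable ℝ (fun t => D (x, t) (1, 0)) := by
    intro x
    have : ContDiff ℝ (⊤ : ℕ∞) (fun t : ℝ => D (x, t)) :=
      hDsmooth.comp (contDiff_const.prodMk contDiff_id)
    exact (this.clm_apply contDiff_const).differentiable (by simp)
  -- ∂x z independent of y
  have hindep : ∀ x y : ℝ, D (x, y) (1, 0) = D (x, 0) (1, 0) := by
    intro x y
    have h0 : ∀ t, deriv (fun t => D (x, t) (1, 0)) t = 0 := by
      intro t
      rw [← hzxy x t]
      exact (hsplit x t).1
    exact is_const_of_deriv_eq_zero (hDdiff x) h0 y 0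
  -- z x y = z x 0 + z 0 y - z 0 0
  have hsum : ∀ x y : ℝ, z x y = z x 0 + (z 0 y - z 0 0) := by
    intro x y
    have hg : ∀ x' : ℝ, HasDerivAt (fun s => z s y - z s 0) 0 x' := by
      intro x'
      have := (hx x' y).sub (hx x' 0)
      rwa [hindep x' y, sub_self] at this
    have hdiff : Differentiable ℝ (fun s => z s y - z s 0) :=
      fun x' => (hg x').differentiableAt
    have hder : ∀ x', deriv (fun s => z s y - z s 0) x' = 0 := fun x' => (hg x').deriv
    have := is_const_of_deriv_eq_zero hdiff hder x 0
    linarith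
  set F : ℝ → ℝ := fun x => z x 0 with hF
  set G : ℝ → ℝ := fun y => z 0 y with hG
  have hFsm : ContDiff ℝ (⊤ : ℕ∞) F := hz'.comp (contDiff_id.prodMk contDiff_const)
  have hGsm : ContDiff ℝ (⊤ : ℕ∞) G := hz'.comp (contDiff_const.prodMk contDiff_id)
  -- zxx in terms of F, zyy in terms of G
  have hzxx : ∀ x y : ℝ, zxx z x y = deriv (deriv F) x := by
    intro x y
    unfold zxx
    congr 1
    funext s
    have : (fun t => z t y) = fun t => F t + (z 0 y - z 0 0) := by
      funext t; rw [hsum t y]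
    rw [this, deriv_add_const]
  have hzyy : ∀ x y : ℝ, zyy z x y = deriv (deriv G) y := by
    intro x y
    unfold zyy
    congr 1
    funext s
    have : (fun t => z x t) = fun t => G t + (z x 0 - z 0 0) := by
      funext t; rw [hsum x t]; show z x 0 + (z 0 t - z 0 0) = z 0 t + (z x 0 - z 0 0); ring
    rw [this, deriv_add_const]
  set a : ℝ := deriv (deriv F) 0 with ha
  have hF2 : ∀ x, deriv (deriv F) x = a := by
    intro x
    have h1 := (hsplit x 0).2
    have h2 := (hsplit 0 0).2
    rw [hzxx x 0, hzyy x 0] at h1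
    rw [hzxx 0 0, hzyy 0 0] at h2
    rw [h1, ← h2]
  have hG2 : ∀ y, deriv (deriv G) y = a := by
    intro y
    have h1 := (hsplit 0 y).2
    rw [hzxx 0 y, hzyy 0 y] at h1
    rw [← h1]
  have hFq := quad_of_deriv2_const F hFsm a hF2
  have hGq := quad_of_deriv2_const G hGsm a hG2
  refine ⟨a / 2, deriv F 0, deriv G 0, z 0 0, fun x y => ?_⟩
  have hF0 : F 0 = z 0 0 := rfl
  have hG0 : G 0 = z 0 0 := rfl
  have := hsum x y
  rw [this]
  have e1 : z x 0 = F x := rfl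
  have e2 : z 0 y = G y := rfl
  rw [e1, e2, hFq x, hGq y, hF0, hG0]
  ring
end

section
/- Let f : ℝ → ℝ be a C² function and c₃, m₀ nonzero constants such that (m₀/(2c₃) + f)·f'' − 2(f')² = 0 on an interval, with f nonconstant. Then there exist constants c₄ ≠ 0 and d₉ such that f(x) = −(1/(c₄x + d₉) + m₀/(2c₃)) on that interval. -/
/-!
Where `u ≠ 0`, the substitution `w = 1 / u` turns `u u'' = 2 u'²` into `w'' = 0`, so `1 / u` is
affine on every interval avoiding the zeros of `u`. If `u` vanished at some point but not
everywhere, then on the interval from a nonzero point to the nearest zero `p` we would have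
`u x (c x + d) = 1`, and continuity would give `0 = 1` at `p`. Applied to `u = m₀ / (2 c₃) + f`,
nonconstancy of `f` rules out `u ≡ 0` and forces the slope `c` to be nonzero.
-/

open Set

theorem IsOpen.exists_eqOn_affine_of_hasDerivAt_of_hasDerivAt_zero {s : Set ℝ} (hs : IsOpen s)
    (hs' : IsPreconnected s) {g g' : ℝ → ℝ} (hg : ∀ x ∈ s, HasDerivAt g (g' x) x)
    (hg' : ∀ x ∈ s, HasDerivAt g' 0 x) : ∃ c d : ℝ, EqOn g (fun x => c * x + d) s := by
  obtain ⟨c, hc⟩ := hs.exists_is_const_of_deriv_eq_zero hs'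
    (fun x hx => (hg' x hx).differentiableAt.differentiableWithinAt)
    (fun x hx => (hg' x hx).deriv)
  obtain ⟨d, hd⟩ := hs.exists_eq_add_of_deriv_eq hs'
    (fun x hx => (hg x hx).differentiableAt.differentiableWithinAt)
    (differentiableOn_id.const_mul c) (g := (c * ·))
    (fun x hx => by simp [(hg x hx).deriv, hc x hx])
  exact ⟨c, d, hd⟩

section

variable {u : ℝ → ℝ}

theorem exists_inv_eqOn_affine_of_mul_deriv_deriv_eq {s : Set ℝ} (hs : IsOpen s)
    (hs' : IsPreconnected s) (hu : ContDiff ℝ 2 u)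
    (hode : ∀ x ∈ s, u x * deriv (deriv u) x = 2 * deriv u x ^ 2) (hne : ∀ x ∈ s, u x ≠ 0) :
    ∃ c d : ℝ, EqOn u⁻¹ (fun x => c * x + d) s := by
  have hu₁ : Differentiable ℝ u := hu.differentiable (by norm_num)
  have hu₂ : Differentiable ℝ (deriv u) := (hu.iterate_deriv' 1 1).differentiable (by norm_num)
  refine hs.exists_eqOn_affine_of_hasDerivAt_of_hasDerivAt_zero hs' (g' := -deriv u / u ^ 2)
    (fun x hx => (hu₁ x).hasDerivAt.inv (hne x hx)) fun x hx => ?_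
  refine ((hu₂ x).hasDerivAt.neg.div ((hu₁ x).hasDerivAt.pow 2)
    (pow_ne_zero 2 (hne x hx))).congr_deriv ?_
  rw [div_eq_zero_iff, Pi.pow_apply, Pi.neg_apply]
  left
  linear_combination -(u x) * hode x hx

theorem ne_zero_of_mul_deriv_deriv_eq {a b : ℝ} (hu : ContDiff ℝ 2 u)
    (hode : ∀ x ∈ Ioo a b, u x * deriv (deriv u) x = 2 * deriv u x ^ 2)
    {x₀ : ℝ} (hx₀ : x₀ ∈ Ioo a b) (hux₀ : u x₀ ≠ 0) : ∀ x ∈ Ioo a b, u x ≠ 0 := by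
  intro x₁ hx₁ hux₁
  -- `p` is the zero of `u` between `x₁` and `x₀` closest to `x₀`
  obtain ⟨p, ⟨hpI, hup⟩, hpmin⟩ := ((isCompact_uIcc (a := x₁) (b := x₀)).inter_right
    (isClosed_eq hu.continuous continuous_const)).exists_isMinOn ⟨x₁, left_mem_uIcc, hux₁⟩
    (continuous_sub_right x₀).abs.continuousOn
  have hpx₀ : p ≠ x₀ := fun h => hux₀ (h ▸ hup)
  have hJ : uIoo p x₀ ⊆ Ioo a b := uIoo_subset_Ioo
    (uIcc_subset_Icc (Ioo_subset_Icc_self hx₁) (Ioo_subset_Icc_self hx₀) hpI)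
    (Ioo_subset_Icc_self hx₀)
  have hJne : ∀ y ∈ uIoo p x₀, u y ≠ 0 := by
    intro y hy huy
    have hcloser : |y - x₀| < |p - x₀| := by
      rcases hpx₀.lt_or_gt with h | h
      · rw [uIoo_of_lt h] at hy
        rw [abs_of_neg (by linarith [hy.2]), abs_of_neg (sub_neg.2 h)]
        linarith [hy.1]
      · rw [uIoo_of_gt h] at hy
        rw [abs_of_pos (by linarith [hy.1]), abs_of_pos (sub_pos.2 h)]
        linarith [hy.2]
    have hyI : y ∈ uIcc x₁ x₀ := uIcc_subset_uIcc hpI right_mem_uIcc (uIoo_subset_uIcc_self hy)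
    exact (hpmin ⟨hyI, huy⟩).not_gt hcloser
  obtain ⟨c, d, hcd⟩ := exists_inv_eqOn_affine_of_mul_deriv_deriv_eq isOpen_Ioo
    (isConnected_uIoo hpx₀).isPreconnected hu (fun y hy => hode y (hJ hy)) hJne
  have hone : EqOn (fun y => u y * (c * y + d)) 1 (uIoo p x₀) := fun y hy => by
    simp [← hcd hy, hJne y hy]
  have := (hone.closure (by fun_prop) continuous_const) (closure_uIoo hpx₀ ▸ left_mem_uIcc)
  simp [show u p = 0 from hup] at this

end

theorem stmt10_general (a b c₃ m₀ : ℝ)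
    (f : ℝ → ℝ) (hf : ContDiff ℝ 2 f)
    (hode : ∀ x ∈ Set.Ioo a b,
      (m₀ / (2 * c₃) + f x) * deriv (deriv f) x - 2 * (deriv f x) ^ 2 = 0)
    (hnc : ¬ ∃ k : ℝ, ∀ x ∈ Set.Ioo a b, f x = k) :
    ∃ c₄ : ℝ, c₄ ≠ 0 ∧ ∃ d₉ : ℝ, ∀ x ∈ Set.Ioo a b,
      f x = -(1 / (c₄ * x + d₉) + m₀ / (2 * c₃)) := by
  set k := m₀ / (2 * c₃)
  set u : ℝ → ℝ := fun x => k + f x with hu_def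
  have hu : ContDiff ℝ 2 u := contDiff_const.add hf
  have hode_u : ∀ x ∈ Ioo a b, u x * deriv (deriv u) x = 2 * deriv u x ^ 2 := by
    simpa only [hu_def, deriv_const_add', sub_eq_zero] using hode
  obtain ⟨x₀, hx₀, hux₀⟩ : ∃ x₀ ∈ Ioo a b, u x₀ ≠ 0 := by
    by_contra! h
    exact hnc ⟨-k, fun x hx => by linarith [h x hx]⟩
  obtain ⟨c, d, hcd⟩ := exists_inv_eqOn_affine_of_mul_deriv_deriv_eq isOpen_Ioo
    isPreconnected_Ioo hu hode_u (ne_zero_of_mul_deriv_deriv_eq hu hode_u hx₀ hux₀)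
  have hf_eq : ∀ x ∈ Ioo a b, f x = (c * x + d)⁻¹ - k := fun x hx => by
    rw [← show u⁻¹ x = c * x + d from hcd hx, Pi.inv_apply, inv_inv]
    ring
  have hc : c ≠ 0 := by
    rintro rfl
    exact hnc ⟨d⁻¹ - k, fun x hx => by simpa using hf_eq x hx⟩
  refine ⟨-c, neg_ne_zero.2 hc, -d, fun x hx => ?_⟩
  rw [hf_eq x hx, neg_mul, ← neg_add, one_div, inv_neg]
  ring

theorem stmt10 (a b c₃ m₀ : ℝ) (hab : a < b) (hc₃ : c₃ ≠ 0) (hm₀ : m₀ ≠ 0)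
    (f : ℝ → ℝ) (hf : ContDiff ℝ 2 f)
    (hode : ∀ x ∈ Set.Ioo a b,
      (m₀ / (2 * c₃) + f x) * deriv (deriv f) x - 2 * (deriv f x) ^ 2 = 0)
    (hnc : ¬ ∃ k : ℝ, ∀ x ∈ Set.Ioo a b, f x = k) :
    ∃ c₄ : ℝ, c₄ ≠ 0 ∧ ∃ d₉ : ℝ, ∀ x ∈ Set.Ioo a b,
      f x = -(1 / (c₄ * x + d₉) + m₀ / (2 * c₃)) :=
  stmt10_general a b c₃ m₀ f hf hode hnc
end

section
/- Let f, g : ℝ → ℝ be C² functions, neither of which is affine (i.e., f'' and g'' are not identically zero), and suppose z(x,y) = f(x)g(y) satisfies the linear Weingarten relation (f''f)(g''g) − (f')²(g')² + m₀(f''g + fg'') = n₀ for all (x,y) in an open rectangle, with m₀ ≠ 0. Then no such f, g exist; i.e., every linear Weingarten factorable surface with m₀ ≠ 0 has f or g affine (or constant). -/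
open Set Filter ContDiff


section helpers
lemma LW_deriv_zero_on {Φ : ℝ → ℝ} {p q x : ℝ} (hx : x ∈ Ioo p q)
    (h : ∀ t ∈ Ioo p q, Φ t = 0) : deriv Φ x = 0 := by
  have he : Φ =ᶠ[nhds x] (fun _ => (0:ℝ)) :=
    Filter.eventuallyEq_of_mem (Ioo_mem_nhds hx.1 hx.2) h
  rw [he.deriv_eq]; exact deriv_const _ _

lemma LW_deriv_const_on {h : ℝ → ℝ} {p q y : ℝ} (hy : y ∈ Ioo p q) {c : ℝ}
    (hc : ∀ t ∈ Ioo p q, h t = c) : deriv h y = 0 := by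
  have he : h =ᶠ[nhds y] (fun _ => c) :=
    Filter.eventuallyEq_of_mem (Ioo_mem_nhds hy.1 hy.2) hc
  rw [he.deriv_eq]; exact deriv_const _ _

lemma LW_const_on_of_deriv_zero {Φ : ℝ → ℝ} {p q : ℝ}
    (hd : ∀ x ∈ Ioo p q, HasDerivAt Φ 0 x) {x₁ x₂ : ℝ}
    (h1 : x₁ ∈ Ioo p q) (h2 : x₂ ∈ Ioo p q) : Φ x₁ = Φ x₂ := by
  have key : ∀ u v : ℝ, u ∈ Ioo p q → v ∈ Ioo p q → u < v → Φ u = Φ v := by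
    intro u v hu hv huv
    have hsub : Icc u v ⊆ Ioo p q := fun t ht => ⟨lt_of_lt_of_le hu.1 ht.1, lt_of_le_of_lt ht.2 hv.2⟩
    have hco : ContinuousOn Φ (Icc u v) := fun t ht =>
      ((hd t (hsub ht)).continuousAt).continuousWithinAt
    obtain ⟨c, hc, hc2⟩ := exists_hasDerivAt_eq_slope Φ (fun _ => 0) huv hco
      (fun t ht => hd t (hsub ⟨le_of_lt ht.1, le_of_lt ht.2⟩))
    have hne : v - u ≠ 0 := by linarith
    have : Φ v - Φ u = 0 := by
      have := hc2.symm
      rw [div_eq_iff hne] at this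
      simpa using this
    linarith
  rcases lt_trichotomy x₁ x₂ with h | h | h
  · exact key _ _ h1 h2 h
  · rw [h]
  · exact (key _ _ h2 h1 h).symm

lemma LW_exists_subinterval {h : ℝ → ℝ} (hc : Continuous h) {p q x₀ : ℝ}
    (hx : x₀ ∈ Ioo p q) (hne : h x₀ ≠ 0) :
    ∃ p' q', p' < q' ∧ Ioo p' q' ⊆ Ioo p q ∧ ∀ x ∈ Ioo p' q', h x ≠ 0 := by
  have hop : IsOpen {x | h x ≠ 0} := isOpen_ne.preimage hc
  have hmem : ({x | h x ≠ 0} ∩ Ioo p q) ∈ nhds x₀ :=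
    Filter.inter_mem (hop.mem_nhds hne) (Ioo_mem_nhds hx.1 hx.2)
  obtain ⟨l, u, hlu, hsub⟩ := mem_nhds_iff_exists_Ioo_subset.mp hmem
  exact ⟨l, u, hlu.1.trans hlu.2, fun x hx => (hsub hx).2, fun x hx => (hsub hx).1⟩

lemma LW_cd_deriv {f : ℝ → ℝ} (hf : ContDiff ℝ ∞ f) : ContDiff ℝ ∞ (deriv f) :=
  (contDiff_infty_iff_deriv.mp hf).2

lemma LW_cd_diff {f : ℝ → ℝ} (hf : ContDiff ℝ ∞ f) : Differentiable ℝ f :=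
  (contDiff_infty_iff_deriv.mp hf).1

lemma LW_mid {p q : ℝ} (h : p < q) : (p+q)/2 ∈ Ioo p q := ⟨by linarith, by linarith⟩

/-- if f'' ≠ 0 on (p,q) then f' is not identically zero there, and we can find
a subinterval where f' ≠ 0 -/
lemma LW_sub_f1 {f : ℝ → ℝ} (hf : ContDiff ℝ ∞ f) {p q : ℝ} (hpq : p < q)
    (hf2 : ∀ x ∈ Ioo p q, deriv (deriv f) x ≠ 0) :
    ∃ p' q', p' < q' ∧ Ioo p' q' ⊆ Ioo p q ∧ ∀ x ∈ Ioo p' q', deriv f x ≠ 0 := by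
  have hex : ∃ x₀ ∈ Ioo p q, deriv f x₀ ≠ 0 := by
    by_contra hco
    push_neg at hco
    exact hf2 _ (LW_mid hpq) (LW_deriv_const_on (LW_mid hpq) hco)
  obtain ⟨x₀, hx₀, hne⟩ := hex
  exact LW_exists_subinterval (LW_cd_diff (LW_cd_deriv hf)).continuous hx₀ hne

/-- if f'' ≠ 0 on (p,q) then we can find a subinterval where f ≠ 0 -/
lemma LW_sub_f0 {f : ℝ → ℝ} (hf : ContDiff ℝ ∞ f) {p q : ℝ} (hpq : p < q)
    (hf2 : ∀ x ∈ Ioo p q, deriv (deriv f) x ≠ 0) :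
    ∃ p' q', p' < q' ∧ Ioo p' q' ⊆ Ioo p q ∧ ∀ x ∈ Ioo p' q', f x ≠ 0 := by
  have hex : ∃ x₀ ∈ Ioo p q, f x₀ ≠ 0 := by
    by_contra hco
    push_neg at hco
    have h1 : ∀ x ∈ Ioo p q, deriv f x = 0 := fun x hx => LW_deriv_const_on hx hco
    exact hf2 _ (LW_mid hpq) (LW_deriv_const_on (LW_mid hpq) h1)
  obtain ⟨x₀, hx₀, hne⟩ := hex
  exact LW_exists_subinterval (LW_cd_diff hf).continuous hx₀ hne
end helpers

lemma LW_spec (m n : ℝ) (hm : m ≠ 0) (f g : ℝ → ℝ)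
    (hf : ContDiff ℝ ∞ f) (hg : ContDiff ℝ ∞ g)
    {a₁ b₁ c₁ d₁ : ℝ} (hI : a₁ < b₁) (hJ : c₁ < d₁)
    (hf2 : ∀ x ∈ Ioo a₁ b₁, deriv (deriv f) x ≠ 0)
    (hg2 : ∀ y ∈ Ioo c₁ d₁, deriv (deriv g) y ≠ 0)
    (hW : ∀ x ∈ Ioo a₁ b₁, ∀ y ∈ Ioo c₁ d₁,
      (deriv (deriv f) x * f x) * (deriv (deriv g) y * g y)
        - (deriv f x) ^ 2 * (deriv g y) ^ 2
        + m * (deriv (deriv f) x * g y + f x * deriv (deriv g) y) = n)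
    {c₂ d₂ : ℝ} (hJ2 : c₂ < d₂) (hsub : Ioo c₂ d₂ ⊆ Ioo c₁ d₁)
    (α β : ℝ) (hspec : ∀ y ∈ Ioo c₂ d₂, deriv (deriv g) y = α * g y + β) : False := by
  have hfd0 : ∀ x, HasDerivAt f (deriv f x) x :=
    fun x => ((LW_cd_diff hf) x).hasDerivAt
  have hfd1 : ∀ x, HasDerivAt (deriv f) (deriv (deriv f) x) x :=
    fun x => ((LW_cd_diff (LW_cd_deriv hf)) x).hasDerivAt
  have hgd0 : ∀ y, HasDerivAt g (deriv g y) y :=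
    fun y => ((LW_cd_diff hg) y).hasDerivAt
  have hgd1 : ∀ y, HasDerivAt (deriv g) (deriv (deriv g) y) y :=
    fun y => ((LW_cd_diff (LW_cd_deriv hg)) y).hasDerivAt
  set f1 := deriv f with hf1def
  set f2 := deriv (deriv f) with hf2def
  set g1 := deriv g with hg1def
  set g2 := deriv (deriv g) with hg2def
  have hy₀ : (c₂+d₂)/2 ∈ Ioo c₂ d₂ := LW_mid hJ2
  set y₀ := (c₂+d₂)/2 with hy₀def
  have hg2' : ∀ y ∈ Ioo c₂ d₂, g2 y ≠ 0 := fun y hy => hg2 y (hsub hy)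
  obtain ⟨c₃, d₃, hJ3, hsub3, hg1ne⟩ := LW_sub_f1 hg hJ2 hg2'
  have hy₃ : (c₃+d₃)/2 ∈ Ioo c₃ d₃ := LW_mid hJ3
  set y₃ := (c₃+d₃)/2 with hy₃def
  by_cases hα : α = 0
  · -- quadratic case : g'' = β ≠ 0 on J'
    subst hα
    have hβg2 : ∀ y ∈ Ioo c₂ d₂, g2 y = β := by
      intro y hy; rw [hspec y hy]; ring
    have hβ : β ≠ 0 := by
      have := hg2' y₀ hy₀; rw [hβg2 y₀ hy₀] at this; exact this
    have hTd : ∀ y ∈ Ioo c₂ d₂, HasDerivAt (fun t => (g1 t)^2 - 2*β*g t) 0 y := by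
      intro y hy
      have h1 : HasDerivAt (fun t => (g1 t)^2 - 2*β*g t)
          (2*(g1 y)^1*(g2 y) - 2*β*(g1 y)) y :=
        ((hgd1 y).pow 2).sub ((hgd0 y).const_mul (2*β))
      have h2 : 2*(g1 y)^1*(g2 y) - 2*β*(g1 y) = 0 := by
        rw [hβg2 y hy]; ring
      rwa [h2] at h1
    set e := (g1 y₀)^2 - 2*β*g y₀ with hedef
    have hT : ∀ y ∈ Ioo c₂ d₂, (g1 y)^2 = 2*β*g y + e := by
      intro y hy
      have h2 : (g1 y)^2 - 2*β*g y = (g1 y₀)^2 - 2*β*g y₀ :=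
        LW_const_on_of_deriv_zero hTd hy hy₀
      rw [hedef]; linarith
    have hII : ∀ x ∈ Ioo a₁ b₁, ∀ y ∈ Ioo c₂ d₂,
        (β*(f2 x*f x) - 2*β*(f1 x)^2 + m*f2 x) * g y
          + (-e*(f1 x)^2 + m*β*f x - n) = 0 := by
      intro x hx y hy
      have h1 := hW x hx y (hsub hy)
      have h2 := hβg2 y hy
      have h3 := hT y hy
      linear_combination h1 - (f2 x * f x * g y + m * f x) * h2 + (f1 x)^2 * h3
    have hB : ∀ x ∈ Ioo a₁ b₁, β*(f2 x*f x) - 2*β*(f1 x)^2 + m*f2 x = 0 := by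
      intro x hx
      have h0 := LW_deriv_zero_on (hsub3 hy₃) (fun t ht => hII x hx t ht)
      have hd : HasDerivAt (fun y => (β*(f2 x*f x) - 2*β*(f1 x)^2 + m*f2 x) * g y
            + (-e*(f1 x)^2 + m*β*f x - n))
          ((β*(f2 x*f x) - 2*β*(f1 x)^2 + m*f2 x) * g1 y₃) y₃ :=
        ((hgd0 _).const_mul _).add_const _
      rw [hd.deriv] at h0
      exact (mul_eq_zero.mp h0).resolve_right (hg1ne _ hy₃)
    have hC : ∀ x ∈ Ioo a₁ b₁, -e*(f1 x)^2 + m*β*f x - n = 0 := by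
      intro x hx
      have h1 := hII x hx _ (hsub3 hy₃)
      rw [hB x hx] at h1; linarith
    have hV : ∀ x ∈ Ioo a₁ b₁, f1 x * (m*β - 2*e*f2 x) = 0 := by
      intro x hx
      have h0 := LW_deriv_zero_on hx hC
      have hd : HasDerivAt (fun x => -e*(f1 x)^2 + m*β*f x - n)
          ((-e)*(2*(f1 x)^1*(f2 x)) + (m*β)*(f1 x)) x :=
        ((((hfd1 x).pow 2).const_mul (-e)).add ((hfd0 x).const_mul (m*β))).sub_const n
      rw [hd.deriv] at h0
      linear_combination h0
    by_cases he : e = 0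
    · have hf1z : ∀ x ∈ Ioo a₁ b₁, f1 x = 0 := by
        intro x hx
        have h1 := hV x hx
        rw [he] at h1
        have h2 : f1 x * (m*β) = 0 := by linear_combination h1
        exact (mul_eq_zero.mp h2).resolve_right (mul_ne_zero hm hβ)
      exact hf2 _ (LW_mid hI) (LW_deriv_const_on (LW_mid hI) hf1z)
    · obtain ⟨a₂, b₂, hI2, hsubI2, hf1ne⟩ := LW_sub_f1 hf hI hf2
      set κ := m*β/(2*e) with hκdef
      have h2e : (2:ℝ)*e ≠ 0 := mul_ne_zero two_ne_zero he
      have hκ : κ ≠ 0 := div_ne_zero (mul_ne_zero hm hβ) h2e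
      have hf2κ : ∀ x ∈ Ioo a₂ b₂, f2 x = κ := by
        intro x hx
        have h1 := (mul_eq_zero.mp (hV x (hsubI2 hx))).resolve_left (hf1ne x hx)
        rw [hκdef, eq_div_iff h2e]
        linarith
      have hVI : ∀ x ∈ Ioo a₂ b₂, β*κ*f x - 2*β*(f1 x)^2 + m*κ = 0 := by
        intro x hx
        have h1 := hB x (hsubI2 hx)
        rw [hf2κ x hx] at h1; linarith
      have hx₂ : (a₂+b₂)/2 ∈ Ioo a₂ b₂ := LW_mid hI2
      have h0 := LW_deriv_zero_on hx₂ (fun t ht => hVI t ht)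
      have hd : HasDerivAt (fun x => β*κ*f x - 2*β*(f1 x)^2 + m*κ)
          (β*κ*(f1 ((a₂+b₂)/2)) - 2*β*(2*(f1 ((a₂+b₂)/2))^1*(f2 ((a₂+b₂)/2)))) ((a₂+b₂)/2) :=
        (((hfd0 _).const_mul (β*κ)).sub (((hfd1 _).pow 2).const_mul (2*β))).add_const (m*κ)
      rw [hd.deriv] at h0
      rw [hf2κ _ hx₂] at h0
      have h3 : (3*β*κ) * f1 ((a₂+b₂)/2) = 0 := by linear_combination -h0
      have h4 := (mul_eq_zero.mp h3).resolve_right (hf1ne _ hx₂)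
      have h5 : (3:ℝ)*β*κ ≠ 0 := mul_ne_zero (mul_ne_zero three_ne_zero hβ) hκ
      exact h5 h4
  · -- α ≠ 0 case
    have hTd : ∀ y ∈ Ioo c₂ d₂,
        HasDerivAt (fun t => (g1 t)^2 - α*(g t)^2 - 2*β*g t) 0 y := by
      intro y hy
      have h1 : HasDerivAt (fun t => (g1 t)^2 - α*(g t)^2 - 2*β*g t)
          (2*(g1 y)^1*(g2 y) - α*(2*(g y)^1*(g1 y)) - 2*β*(g1 y)) y :=
        (((hgd1 y).pow 2).sub (((hgd0 y).pow 2).const_mul α)).sub ((hgd0 y).const_mul (2*β))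
      have h2 : 2*(g1 y)^1*(g2 y) - α*(2*(g y)^1*(g1 y)) - 2*β*(g1 y) = 0 := by
        rw [hspec y hy]; ring
      rwa [h2] at h1
    set e := (g1 y₀)^2 - α*(g y₀)^2 - 2*β*g y₀ with hedef
    have hT : ∀ y ∈ Ioo c₂ d₂, (g1 y)^2 = α*(g y)^2 + 2*β*g y + e := by
      intro y hy
      have h2 : (g1 y)^2 - α*(g y)^2 - 2*β*g y = (g1 y₀)^2 - α*(g y₀)^2 - 2*β*g y₀ :=
        LW_const_on_of_deriv_zero hTd hy hy₀
      rw [hedef]; linarith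
    have hII : ∀ x ∈ Ioo a₁ b₁, ∀ y ∈ Ioo c₂ d₂,
        (α*(f2 x*f x - (f1 x)^2))*(g y)^2
          + (β*(f2 x*f x) - 2*β*(f1 x)^2 + m*f2 x + m*α*f x) * g y
          + (-e*(f1 x)^2 + m*β*f x - n) = 0 := by
      intro x hx y hy
      have h1 := hW x hx y (hsub hy)
      have h2 := hspec y hy
      have h3 := hT y hy
      linear_combination h1 - (f2 x * f x * g y + m * f x) * h2 + (f1 x)^2 * h3
    have hIII : ∀ x ∈ Ioo a₁ b₁, ∀ y ∈ Ioo c₃ d₃,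
        2*(α*(f2 x*f x - (f1 x)^2))*g y
          + (β*(f2 x*f x) - 2*β*(f1 x)^2 + m*f2 x + m*α*f x) = 0 := by
      intro x hx y hy
      have h0 := LW_deriv_zero_on (hsub3 hy) (fun t ht => hII x hx t ht)
      have hd : HasDerivAt (fun y => (α*(f2 x*f x - (f1 x)^2))*(g y)^2
          + (β*(f2 x*f x) - 2*β*(f1 x)^2 + m*f2 x + m*α*f x) * g y
          + (-e*(f1 x)^2 + m*β*f x - n))
          ((α*(f2 x*f x - (f1 x)^2))*(2*(g y)^1*(g1 y))
            + (β*(f2 x*f x) - 2*β*(f1 x)^2 + m*f2 x + m*α*f x) * g1 y) y :=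
        ((((hgd0 y).pow 2).const_mul _).add ((hgd0 y).const_mul _)).add_const _
      rw [hd.deriv] at h0
      have h4 : (2*(α*(f2 x*f x - (f1 x)^2))*g y
          + (β*(f2 x*f x) - 2*β*(f1 x)^2 + m*f2 x + m*α*f x)) * g1 y = 0 := by
        linear_combination h0
      exact (mul_eq_zero.mp h4).resolve_right (hg1ne y hy)
    have hA : ∀ x ∈ Ioo a₁ b₁, α*(f2 x*f x - (f1 x)^2) = 0 := by
      intro x hx
      have h0 := LW_deriv_zero_on hy₃ (fun t ht => hIII x hx t ht)
      have hd : HasDerivAt (fun y => 2*(α*(f2 x*f x - (f1 x)^2))*g y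
          + (β*(f2 x*f x) - 2*β*(f1 x)^2 + m*f2 x + m*α*f x))
          (2*(α*(f2 x*f x - (f1 x)^2))*g1 y₃) y₃ :=
        ((hgd0 _).const_mul _).add_const _
      rw [hd.deriv] at h0
      have h4 : (α*(f2 x*f x - (f1 x)^2)) * (2*g1 y₃) = 0 := by linear_combination h0
      exact (mul_eq_zero.mp h4).resolve_right
        (mul_ne_zero two_ne_zero (hg1ne _ hy₃))
    have hPQ : ∀ x ∈ Ioo a₁ b₁, f2 x * f x = (f1 x)^2 := by
      intro x hx
      have h1 := (mul_eq_zero.mp (hA x hx)).resolve_left hα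
      linarith
    have hBz : ∀ x ∈ Ioo a₁ b₁,
        β*(f2 x*f x) - 2*β*(f1 x)^2 + m*f2 x + m*α*f x = 0 := by
      intro x hx
      have h1 := hIII x hx _ hy₃
      rw [hA x hx] at h1; linarith
    obtain ⟨a₂, b₂, hI2, hsubI2, hf0ne⟩ := LW_sub_f0 hf hI hf2
    have hx₂ : (a₂+b₂)/2 ∈ Ioo a₂ b₂ := LW_mid hI2
    set x₂ := (a₂+b₂)/2 with hx₂def
    have hφd : ∀ x ∈ Ioo a₂ b₂, HasDerivAt (fun t => f1 t / f t) 0 x := by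
      intro x hx
      have h1 : HasDerivAt (fun t => f1 t / f t)
          ((f2 x * f x - f1 x * f1 x)/(f x)^2) x :=
        (hfd1 x).div (hfd0 x) (hf0ne x hx)
      have h2 : (f2 x * f x - f1 x * f1 x)/(f x)^2 = 0 := by
        rw [div_eq_zero_iff]; left
        have := hPQ x (hsubI2 hx); linarith
      rwa [h2] at h1
    set s := f1 x₂ / f x₂ with hsdef
    have hsf : ∀ x ∈ Ioo a₂ b₂, f1 x = s * f x := by
      intro x hx
      have h1 : f1 x / f x = f1 x₂ / f x₂ := LW_const_on_of_deriv_zero hφd hx hx₂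
      rw [div_eq_iff (hf0ne x hx)] at h1
      rw [h1, hsdef]
    have hf2s : ∀ x ∈ Ioo a₂ b₂, f2 x = s^2 * f x := by
      intro x hx
      have h1 := hPQ x (hsubI2 hx)
      rw [hsf x hx] at h1
      have h2 : f2 x * f x = (s^2*f x) * f x := by linear_combination h1
      exact mul_right_cancel₀ (hf0ne x hx) h2
    have hs : s ≠ 0 := by
      intro h0
      have h1 := hf2s x₂ hx₂
      rw [h0] at h1
      exact hf2 x₂ (hsubI2 hx₂) (by simpa using h1)
    have hf1ne : ∀ x ∈ Ioo a₂ b₂, f1 x ≠ 0 := by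
      intro x hx
      rw [hsf x hx]
      exact mul_ne_zero hs (hf0ne x hx)
    have hE5 : ∀ x ∈ Ioo a₂ b₂, -β*s^2*(f x)^2 + m*(s^2+α)*f x = 0 := by
      intro x hx
      have h1 := hBz x (hsubI2 hx)
      rw [hf2s x hx, hsf x hx] at h1
      linear_combination h1
    have hE7 : ∀ x ∈ Ioo a₂ b₂, -2*β*s^2*f x + m*(s^2+α) = 0 := by
      intro x hx
      have h0 := LW_deriv_zero_on hx hE5
      have hd : HasDerivAt (fun x => -β*s^2*(f x)^2 + m*(s^2+α)*f x)
          ((-β*s^2)*(2*(f x)^1*(f1 x)) + (m*(s^2+α))*(f1 x)) x :=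
        (((hfd0 x).pow 2).const_mul (-β*s^2)).add ((hfd0 x).const_mul (m*(s^2+α)))
      rw [hd.deriv] at h0
      have h4 : (-2*β*s^2*f x + m*(s^2+α)) * f1 x = 0 := by linear_combination h0
      exact (mul_eq_zero.mp h4).resolve_right (hf1ne x hx)
    have hβ0 : β = 0 := by
      have h0 := LW_deriv_zero_on hx₂ hE7
      have hd : HasDerivAt (fun x => -2*β*s^2*f x + m*(s^2+α))
          (-2*β*s^2*(f1 x₂)) x₂ :=
        ((hfd0 x₂).const_mul (-2*β*s^2)).add_const _
      rw [hd.deriv] at h0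
      have h4 : β * (-2*s^2*f1 x₂) = 0 := by linear_combination h0
      refine (mul_eq_zero.mp h4).resolve_right ?_
      exact mul_ne_zero (mul_ne_zero (by norm_num) (pow_ne_zero 2 hs)) (hf1ne x₂ hx₂)
    have hαs : s^2 + α = 0 := by
      have h1 := hE7 x₂ hx₂
      rw [hβ0] at h1
      have h4 : m * (s^2+α) = 0 := by linear_combination h1
      exact (mul_eq_zero.mp h4).resolve_left hm
    -- final stage: identities on I₂ × J₁
    have hF1 : ∀ x ∈ Ioo a₂ b₂, ∀ y ∈ Ioo c₁ d₁,
        s^2*(f x)^2*(g2 y*g y - (g1 y)^2) + m*f x*(s^2*g y + g2 y) - n = 0 := by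
      intro x hx y hy
      have h1 := hW x (hsubI2 hx) y hy
      rw [hf2s x hx, hsf x hx] at h1
      linear_combination h1
    have hF3 : ∀ x ∈ Ioo a₂ b₂, ∀ y ∈ Ioo c₁ d₁,
        2*s^2*f x*(g2 y*g y - (g1 y)^2) + m*(s^2*g y + g2 y) = 0 := by
      intro x hx y hy
      have h0 := LW_deriv_zero_on hx (fun t ht => hF1 t ht y hy)
      have hd : HasDerivAt (fun x => s^2*(f x)^2*(g2 y*g y - (g1 y)^2)
            + m*f x*(s^2*g y + g2 y) - n)
          ((s^2*(2*(f x)^1*(f1 x)))*(g2 y*g y - (g1 y)^2)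
            + m*(f1 x)*(s^2*g y + g2 y)) x := by
        have hsq : HasDerivAt (fun x => s^2*(f x)^2) (s^2*(2*(f x)^1*(f1 x))) x :=
          ((hfd0 x).pow 2).const_mul (s^2)
        exact ((hsq.mul_const _).add (((hfd0 x).const_mul m).mul_const _)).sub_const n
      rw [hd.deriv] at h0
      have h4 : (2*s^2*f x*(g2 y*g y - (g1 y)^2) + m*(s^2*g y + g2 y)) * f1 x = 0 := by
        linear_combination h0
      exact (mul_eq_zero.mp h4).resolve_right (hf1ne x hx)
    have hGT : ∀ y ∈ Ioo c₁ d₁, g2 y*g y - (g1 y)^2 = 0 := by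
      intro y hy
      have h0 := LW_deriv_zero_on hx₂ (fun t ht => hF3 t ht y hy)
      have hd : HasDerivAt (fun x => 2*s^2*f x*(g2 y*g y - (g1 y)^2)
            + m*(s^2*g y + g2 y))
          (2*s^2*(f1 x₂)*(g2 y*g y - (g1 y)^2)) x₂ := by
        have h5 : HasDerivAt (fun x => 2*s^2*f x*(g2 y*g y - (g1 y)^2))
            (2*s^2*(f1 x₂)*(g2 y*g y - (g1 y)^2)) x₂ :=
          ((hfd0 x₂).const_mul (2*s^2)).mul_const (g2 y*g y - (g1 y)^2)
        exact h5.add_const _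
      rw [hd.deriv] at h0
      have h4 : (g2 y*g y - (g1 y)^2) * (2*s^2*f1 x₂) = 0 := by linear_combination h0
      refine (mul_eq_zero.mp h4).resolve_right ?_
      exact mul_ne_zero (mul_ne_zero two_ne_zero (pow_ne_zero 2 hs)) (hf1ne x₂ hx₂)
    have hg2s : ∀ y ∈ Ioo c₁ d₁, g2 y = -s^2 * g y := by
      intro y hy
      have h1 := hF3 x₂ hx₂ y hy
      rw [hGT y hy] at h1
      have h4 : m * (s^2*g y + g2 y) = 0 := by linear_combination h1
      have h5 := (mul_eq_zero.mp h4).resolve_left hm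
      linarith
    have hgz : ∀ y ∈ Ioo c₁ d₁, g y = 0 := by
      intro y hy
      have h1 := hGT y hy
      rw [hg2s y hy] at h1
      have h2 : s^2*(g y)^2 + (g1 y)^2 = 0 := by linear_combination -h1
      have h3 : (g y)^2 = 0 := by
        have hs2 : 0 < s^2 := by positivity
        nlinarith [sq_nonneg (g y), sq_nonneg (g1 y)]
      exact pow_eq_zero_iff two_ne_zero |>.mp h3
    have hg1z : ∀ y ∈ Ioo c₁ d₁, g1 y = 0 :=
      fun y hy => LW_deriv_const_on hy hgz
    exact hg2 _ (LW_mid hJ) (LW_deriv_const_on (LW_mid hJ) hg1z)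

lemma LW_bothSpan (g : ℝ → ℝ) (hg : ContDiff ℝ ∞ g) {c₁ d₁ : ℝ} (hJ : c₁ < d₁)
    (hg2 : ∀ y ∈ Ioo c₁ d₁, deriv (deriv g) y ≠ 0)
    (a₁ a₂ a₃ b₁ b₂ b₃ : ℝ)
    (hG : ∀ y ∈ Ioo c₁ d₁, deriv (deriv g) y * g y
      = a₁ * g y + a₂ * deriv (deriv g) y + a₃)
    (hT : ∀ y ∈ Ioo c₁ d₁, (deriv g y)^2
      = b₁ * g y + b₂ * deriv (deriv g) y + b₃) :
    ∃ c₂ d₂ α β, c₂ < d₂ ∧ Ioo c₂ d₂ ⊆ Ioo c₁ d₁ ∧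
      ∀ y ∈ Ioo c₂ d₂, deriv (deriv g) y = α * g y + β := by
  have hgd0 : ∀ y, HasDerivAt g (deriv g y) y :=
    fun y => ((LW_cd_diff hg) y).hasDerivAt
  have hgd1 : ∀ y, HasDerivAt (deriv g) (deriv (deriv g) y) y :=
    fun y => ((LW_cd_diff (LW_cd_deriv hg)) y).hasDerivAt
  have hgd2 : ∀ y, HasDerivAt (deriv (deriv g)) (deriv (deriv (deriv g)) y) y :=
    fun y => ((LW_cd_diff (LW_cd_deriv (LW_cd_deriv hg))) y).hasDerivAt
  set g1 := deriv g with hg1def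
  set g2 := deriv (deriv g) with hg2def
  set g3 := deriv (deriv (deriv g)) with hg3def
  obtain ⟨c₃, d₃, hJ3, hsub3, hg1ne⟩ := LW_sub_f1 hg hJ hg2
  -- derivative of hT
  have he1 : ∀ y ∈ Ioo c₁ d₁,
      2*(g1 y)^1*(g2 y) - (b₁*(g1 y) + b₂*(g3 y)) = 0 := by
    intro y hy
    have h0 := LW_deriv_zero_on hy (fun t ht => by
      show (g1 t)^2 - (b₁*g t + b₂*g2 t + b₃) = 0
      have := hT t ht; linarith :
        ∀ t ∈ Ioo c₁ d₁, (fun y => (g1 y)^2 - (b₁*g y + b₂*g2 y + b₃)) t = 0)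
    have hd : HasDerivAt (fun y => (g1 y)^2 - (b₁*g y + b₂*g2 y + b₃))
        (2*(g1 y)^1*(g2 y) - (b₁*(g1 y) + b₂*(g3 y))) y :=
      ((hgd1 y).pow 2).sub ((((hgd0 y).const_mul b₁).add ((hgd2 y).const_mul b₂)).add_const b₃)
    rw [hd.deriv] at h0
    exact h0
  by_cases hb₂ : b₂ = 0
  · refine ⟨c₃, d₃, 0, b₁/2, hJ3, hsub3, ?_⟩
    intro y hy
    have h1 := he1 y (hsub3 hy)
    rw [hb₂] at h1
    have h2 : g1 y * (2*g2 y - b₁) = 0 := by linear_combination h1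
    have h3 := (mul_eq_zero.mp h2).resolve_left (hg1ne y hy)
    field_simp
    linarith
  · -- derivative of hG
    have he2 : ∀ y ∈ Ioo c₁ d₁,
        (g3 y*g y + g2 y*g1 y) - (a₁*(g1 y) + a₂*(g3 y)) = 0 := by
      intro y hy
      have h0 := LW_deriv_zero_on hy (fun t ht => by
        show g2 t * g t - (a₁*g t + a₂*g2 t + a₃) = 0
        have := hG t ht; linarith :
          ∀ t ∈ Ioo c₁ d₁, (fun y => g2 y * g y - (a₁*g y + a₂*g2 y + a₃)) t = 0)
      have hd : HasDerivAt (fun y => g2 y * g y - (a₁*g y + a₂*g2 y + a₃))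
          ((g3 y*g y + g2 y*g1 y) - (a₁*(g1 y) + a₂*(g3 y))) y :=
        ((hgd2 y).mul (hgd0 y)).sub
          ((((hgd0 y).const_mul a₁).add ((hgd2 y).const_mul a₂)).add_const a₃)
      rw [hd.deriv] at h0
      exact h0
    refine ⟨c₃, d₃, (b₁-2*a₁)/b₂, (a₁*b₂-a₂*b₁-2*a₃)/b₂, hJ3, hsub3, ?_⟩
    intro y hy
    have e1 := he1 y (hsub3 hy)
    have e2 := he2 y (hsub3 hy)
    have e3 := hG y (hsub3 hy)
    have ht : g1 y * (b₂*g2 y - (b₁-2*a₁)*g y - (a₁*b₂-a₂*b₁-2*a₃)) = 0 := by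
      linear_combination (g y - a₂)*e1 + b₂*e2 - 2*g1 y*e3
    have h3 := (mul_eq_zero.mp ht).resolve_left (hg1ne y hy)
    field_simp
    linarith

theorem stmt14 (a b c d m₀ n₀ : ℝ) (hab : a < b) (hcd : c < d) (hm₀ : m₀ ≠ 0)
    (f g : ℝ → ℝ) (hf : ContDiff ℝ (⊤ : ℕ∞) f) (hg : ContDiff ℝ (⊤ : ℕ∞) g)
    (hfna : ¬ ∀ x ∈ Set.Ioo a b, deriv (deriv f) x = 0)
    (hgna : ¬ ∀ y ∈ Set.Ioo c d, deriv (deriv g) y = 0)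
    (hW : ∀ x ∈ Set.Ioo a b, ∀ y ∈ Set.Ioo c d,
      (deriv (deriv f) x * f x) * (deriv (deriv g) y * g y)
        - (deriv f x) ^ 2 * (deriv g y) ^ 2
        + m₀ * (deriv (deriv f) x * g y + f x * deriv (deriv g) y) = n₀) :
    False := by
  have hf' : ContDiff ℝ ∞ f := hf.of_le (mod_cast le_top)
  have hg' : ContDiff ℝ ∞ g := hg.of_le (mod_cast le_top)
  push_neg at hfna hgna
  obtain ⟨x₀, hx₀, hfx₀⟩ := hfna
  obtain ⟨y₀, hy₀, hgy₀⟩ := hgna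
  obtain ⟨a₁, b₁, hI, hsubI, hf2⟩ :=
    LW_exists_subinterval (LW_cd_diff (LW_cd_deriv (LW_cd_deriv hf'))).continuous hx₀ hfx₀
  obtain ⟨c₁, d₁, hJ, hsubJ, hg2⟩ :=
    LW_exists_subinterval (LW_cd_diff (LW_cd_deriv (LW_cd_deriv hg'))).continuous hy₀ hgy₀
  have hW₁ : ∀ x ∈ Ioo a₁ b₁, ∀ y ∈ Ioo c₁ d₁,
      (deriv (deriv f) x * f x) * (deriv (deriv g) y * g y)
        - (deriv f x) ^ 2 * (deriv g y) ^ 2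
        + m₀ * (deriv (deriv f) x * g y + f x * deriv (deriv g) y) = n₀ :=
    fun x hx y hy => hW x (hsubI hx) y (hsubJ hy)
  -- derivative packages
  have hfd0 : ∀ x, HasDerivAt f (deriv f x) x :=
    fun x => ((LW_cd_diff hf') x).hasDerivAt
  have hfd1 : ∀ x, HasDerivAt (deriv f) (deriv (deriv f) x) x :=
    fun x => ((LW_cd_diff (LW_cd_deriv hf')) x).hasDerivAt
  have hfd2 : ∀ x, HasDerivAt (deriv (deriv f)) (deriv (deriv (deriv f)) x) x :=
    fun x => ((LW_cd_diff (LW_cd_deriv (LW_cd_deriv hf'))) x).hasDerivAt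
  set f1 := deriv f with hf1def
  set f2 := deriv (deriv f) with hf2def
  set f3 := deriv (deriv (deriv f)) with hf3def
  set g1 := deriv g with hg1def
  set g2 := deriv (deriv g) with hg2def
  -- M1 : x-derivative of the main identity
  have hM1 : ∀ x ∈ Ioo a₁ b₁, ∀ y ∈ Ioo c₁ d₁,
      (f3 x*f x + f2 x*f1 x)*(g2 y*g y) - (2*(f1 x)^1*(f2 x))*(g1 y)^2
        + m₀*(f3 x*g y + f1 x*g2 y) = 0 := by
    intro x hx y hy
    have h0 := LW_deriv_zero_on hx (fun t ht => by
      show f2 t*f t*(g2 y*g y) - (f1 t)^2*(g1 y)^2 + m₀*(f2 t*g y + f t*g2 y) - n₀ = 0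
      have := hW₁ t ht y hy; linarith :
      ∀ t ∈ Ioo a₁ b₁, (fun x => f2 x*f x*(g2 y*g y) - (f1 x)^2*(g1 y)^2
        + m₀*(f2 x*g y + f x*g2 y) - n₀) t = 0)
    have hd : HasDerivAt (fun x => f2 x*f x*(g2 y*g y) - (f1 x)^2*(g1 y)^2
        + m₀*(f2 x*g y + f x*g2 y) - n₀)
        ((f3 x*f x + f2 x*f1 x)*(g2 y*g y) - (2*(f1 x)^1*(f2 x))*(g1 y)^2
          + m₀*(f3 x*g y + f1 x*g2 y)) x :=
      (((((hfd2 x).mul (hfd0 x)).mul_const (g2 y*g y)).sub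
        (((hfd1 x).pow 2).mul_const ((g1 y)^2))).add
        ((((hfd2 x).mul_const (g y)).add ((hfd0 x).mul_const (g2 y))).const_mul m₀)).sub_const n₀
    rw [hd.deriv] at h0
    exact h0
  -- elimination identities
  have hM2 : ∀ x ∈ Ioo a₁ b₁, ∀ y ∈ Ioo c₁ d₁,
      ((f2 x*f x)*(2*f1 x*f2 x) - (f3 x*f x + f2 x*f1 x)*(f1 x)^2)*(g2 y*g y)
        = m₀*(f3 x*(f1 x)^2 - f2 x*(2*f1 x*f2 x))*g y
          + m₀*(f1 x*(f1 x)^2 - f x*(2*f1 x*f2 x))*g2 y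
          + n₀*(2*f1 x*f2 x) := by
    intro x hx y hy
    have h0 := hW₁ x hx y hy
    have h1 := hM1 x hx y hy
    linear_combination (2*f1 x*f2 x)*h0 - (f1 x)^2*h1
  have hM2' : ∀ x ∈ Ioo a₁ b₁, ∀ y ∈ Ioo c₁ d₁,
      ((f2 x*f x)*(2*f1 x*f2 x) - (f3 x*f x + f2 x*f1 x)*(f1 x)^2)*((g1 y)^2)
        = m₀*(f3 x*(f2 x*f x) - f2 x*(f3 x*f x + f2 x*f1 x))*g y
          + m₀*(f1 x*(f2 x*f x) - f x*(f3 x*f x + f2 x*f1 x))*g2 y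
          + n₀*(f3 x*f x + f2 x*f1 x) := by
    intro x hx y hy
    have h0 := hW₁ x hx y hy
    have h1 := hM1 x hx y hy
    linear_combination (f3 x*f x + f2 x*f1 x)*h0 - (f2 x*f x)*h1
  by_cases hD : ∀ x ∈ Ioo a₁ b₁,
      (f2 x*f x)*(2*f1 x*f2 x) - (f3 x*f x + f2 x*f1 x)*(f1 x)^2 = 0
  · -- D ≡ 0 on I₁
    by_cases hE2 : ∀ x ∈ Ioo a₁ b₁, f1 x*((f1 x)^2 - 2*f x*f2 x) = 0
    · -- E₂ ≡ 0 : leads to f'' locally constant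
      obtain ⟨a₂, b₂, hI2, hsubI2, hf1ne⟩ := LW_sub_f1 hf' hI hf2
      have hkey : ∀ x ∈ Ioo a₂ b₂, (f1 x)^2 - 2*(f x*f2 x) = 0 := by
        intro x hx
        have := (mul_eq_zero.mp (hE2 x (hsubI2 hx))).resolve_left (hf1ne x hx)
        linarith
      have hf0ne : ∀ x ∈ Ioo a₂ b₂, f x ≠ 0 := by
        intro x hx h0
        have h1 := hkey x hx
        rw [h0] at h1
        exact hf1ne x hx (by nlinarith [h1])
      have hf3z : ∀ x ∈ Ioo a₂ b₂, f3 x = 0 := by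
        intro x hx
        have h0 := LW_deriv_zero_on hx hkey
        have hd : HasDerivAt (fun x => (f1 x)^2 - 2*(f x*f2 x))
            (2*(f1 x)^1*(f2 x) - 2*(f1 x*f2 x + f x*f3 x)) x :=
          ((hfd1 x).pow 2).sub (((hfd0 x).mul (hfd2 x)).const_mul 2)
        rw [hd.deriv] at h0
        have h4 : f x * f3 x = 0 := by linear_combination -h0/2
        exact (mul_eq_zero.mp h4).resolve_left (hf0ne x hx)
      have hx₂ : (a₂+b₂)/2 ∈ Ioo a₂ b₂ := LW_mid hI2
      set κ := f2 ((a₂+b₂)/2) with hκdef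
      have hf2κ : ∀ x ∈ Ioo a₂ b₂, f2 x = κ := by
        intro x hx
        refine LW_const_on_of_deriv_zero (fun t ht => ?_) hx hx₂
        have := hfd2 t
        rw [hf3z t ht] at this
        exact this
      -- apply spec with f and g swapped
      have hWs : ∀ y ∈ Ioo c₁ d₁, ∀ x ∈ Ioo a₁ b₁,
          (g2 y * g y) * (f2 x * f x) - (g1 y)^2 * (f1 x)^2
            + m₀ * (g2 y * f x + g y * f2 x) = n₀ := by
        intro y hy x hx
        linear_combination hW₁ x hx y hy
      exact LW_spec m₀ n₀ hm₀ g f hg' hf' hJ hI hg2 hf2 hWs hI2 hsubI2 0 κ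
        (fun x hx => by show f2 x = 0 * f x + κ; rw [hf2κ x hx]; ring)
    · -- some x₅ with E₂ x₅ ≠ 0 : g is special on J₁
      push_neg at hE2
      obtain ⟨x₅, hx₅, hE2ne⟩ := hE2
      have hcoef : m₀*(f1 x₅*(f1 x₅)^2 - f x₅*(2*f1 x₅*f2 x₅)) ≠ 0 :=
        mul_ne_zero hm₀ (fun h0 => hE2ne (by linear_combination h0))
      refine LW_spec m₀ n₀ hm₀ f g hf' hg' hI hJ hf2 hg2 hW₁ hJ (fun y hy => hy)
        (-(m₀*(f3 x₅*(f1 x₅)^2 - f2 x₅*(2*f1 x₅*f2 x₅)))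
          /(m₀*(f1 x₅*(f1 x₅)^2 - f x₅*(2*f1 x₅*f2 x₅))))
        (-(n₀*(2*f1 x₅*f2 x₅))
          /(m₀*(f1 x₅*(f1 x₅)^2 - f x₅*(2*f1 x₅*f2 x₅)))) ?_
      intro y hy
      rw [← hg2def]
      have h2 := hM2 x₅ hx₅ y hy
      rw [hD x₅ hx₅] at h2
      have h3 : g2 y = (-(m₀*(f3 x₅*(f1 x₅)^2 - f2 x₅*(2*f1 x₅*f2 x₅))) * g y
          - n₀*(2*f1 x₅*f2 x₅))
          / (m₀*(f1 x₅*(f1 x₅)^2 - f x₅*(2*f1 x₅*f2 x₅))) := by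
        rw [eq_div_iff hcoef]
        linear_combination -h2
      rw [h3]; ring
  · -- some x₆ with D x₆ ≠ 0 : both G and T in span{g, g'', 1}
    push_neg at hD
    obtain ⟨x₆, hx₆, hDne⟩ := hD
    have hG : ∀ y ∈ Ioo c₁ d₁, g2 y * g y
        = (m₀*(f3 x₆*(f1 x₆)^2 - f2 x₆*(2*f1 x₆*f2 x₆))
            /((f2 x₆*f x₆)*(2*f1 x₆*f2 x₆) - (f3 x₆*f x₆ + f2 x₆*f1 x₆)*(f1 x₆)^2)) * g y
          + (m₀*(f1 x₆*(f1 x₆)^2 - f x₆*(2*f1 x₆*f2 x₆))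
            /((f2 x₆*f x₆)*(2*f1 x₆*f2 x₆) - (f3 x₆*f x₆ + f2 x₆*f1 x₆)*(f1 x₆)^2)) * g2 y
          + n₀*(2*f1 x₆*f2 x₆)
            /((f2 x₆*f x₆)*(2*f1 x₆*f2 x₆) - (f3 x₆*f x₆ + f2 x₆*f1 x₆)*(f1 x₆)^2) := by
      intro y hy
      have h2 := hM2 x₆ hx₆ y hy
      have h4 : g2 y * g y = (m₀*(f3 x₆*(f1 x₆)^2 - f2 x₆*(2*f1 x₆*f2 x₆))*g y
          + m₀*(f1 x₆*(f1 x₆)^2 - f x₆*(2*f1 x₆*f2 x₆))*g2 y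
          + n₀*(2*f1 x₆*f2 x₆))
          /((f2 x₆*f x₆)*(2*f1 x₆*f2 x₆) - (f3 x₆*f x₆ + f2 x₆*f1 x₆)*(f1 x₆)^2) := by
        rw [eq_div_iff hDne]
        linear_combination h2
      rw [h4]; ring
    have hT : ∀ y ∈ Ioo c₁ d₁, (g1 y)^2
        = (m₀*(f3 x₆*(f2 x₆*f x₆) - f2 x₆*(f3 x₆*f x₆ + f2 x₆*f1 x₆))
            /((f2 x₆*f x₆)*(2*f1 x₆*f2 x₆) - (f3 x₆*f x₆ + f2 x₆*f1 x₆)*(f1 x₆)^2)) * g y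
          + (m₀*(f1 x₆*(f2 x₆*f x₆) - f x₆*(f3 x₆*f x₆ + f2 x₆*f1 x₆))
            /((f2 x₆*f x₆)*(2*f1 x₆*f2 x₆) - (f3 x₆*f x₆ + f2 x₆*f1 x₆)*(f1 x₆)^2)) * g2 y
          + n₀*(f3 x₆*f x₆ + f2 x₆*f1 x₆)
            /((f2 x₆*f x₆)*(2*f1 x₆*f2 x₆) - (f3 x₆*f x₆ + f2 x₆*f1 x₆)*(f1 x₆)^2) := by
      intro y hy
      have h2 := hM2' x₆ hx₆ y hy
      have h4 : (g1 y)^2 = (m₀*(f3 x₆*(f2 x₆*f x₆) - f2 x₆*(f3 x₆*f x₆ + f2 x₆*f1 x₆))*g y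
          + m₀*(f1 x₆*(f2 x₆*f x₆) - f x₆*(f3 x₆*f x₆ + f2 x₆*f1 x₆))*g2 y
          + n₀*(f3 x₆*f x₆ + f2 x₆*f1 x₆))
          /((f2 x₆*f x₆)*(2*f1 x₆*f2 x₆) - (f3 x₆*f x₆ + f2 x₆*f1 x₆)*(f1 x₆)^2) := by
        rw [eq_div_iff hDne]
        linear_combination h2
      rw [h4]; ring
    obtain ⟨c₂, d₂, α, β, hJ2, hsub2, hαβ⟩ :=
      LW_bothSpan g hg' hJ hg2 _ _ _ _ _ _ hG hT
    exact LW_spec m₀ n₀ hm₀ f g hf' hg' hI hJ hf2 hg2 hW₁ hJ2 hsub2 α β hαβ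
end

section
/- Every linear Weingarten factorable surface z(x,y) = f(x)g(y) in the isotropic 3-space satisfying 2m₀H + K = n₀ with m₀ ≠ 0 (f, g smooth on an open rectangle) has both K and H constant. -/
open Set

lemma derivZero {F : ℝ → ℝ} {s : Set ℝ} (hs : IsOpen s) {k : ℝ}
    (h : ∀ z ∈ s, F z = k) {x v : ℝ} (hx : x ∈ s) (hF : HasDerivAt F v x) : v = 0 := by
  have he : F =ᶠ[nhds x] fun _ => k := by
    filter_upwards [hs.mem_nhds hx] using h
  exact hF.unique ((hasDerivAt_const x k).congr_of_eventuallyEq he)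

lemma hasDerivAtConstOn {F : ℝ → ℝ} {s : Set ℝ} (hs : IsOpen s) {k x : ℝ}
    (h : ∀ z ∈ s, F z = k) (hx : x ∈ s) : HasDerivAt F 0 x := by
  have he : F =ᶠ[nhds x] fun _ => k := by
    filter_upwards [hs.mem_nhds hx] using h
  exact (hasDerivAt_const x k).congr_of_eventuallyEq he

lemma constOn {F F' : ℝ → ℝ} {a b : ℝ}
    (h : ∀ x, HasDerivAt F (F' x) x) (hz : ∀ x ∈ Ioo a b, F' x = 0) :
    ∀ x ∈ Ioo a b, ∀ x' ∈ Ioo a b, F x = F x' := by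
  have key : ∀ u v : ℝ, u ∈ Ioo a b → v ∈ Ioo a b → u ≤ v → F v = F u := by
    intro u v hu hv huv
    have hcont : ContinuousOn F (Icc u v) := fun z _ =>
      ((h z).differentiableAt.continuousAt).continuousWithinAt
    have hder : ∀ z ∈ Ico u v, HasDerivWithinAt F 0 (Ici z) z := by
      intro z hz'
      have hzI : z ∈ Ioo a b := ⟨lt_of_lt_of_le hu.1 hz'.1, lt_trans hz'.2 hv.2⟩
      have := (h z).hasDerivWithinAt (s := Ici z)
      rwa [hz z hzI] at this
    exact constant_of_has_deriv_right_zero hcont hder v ⟨huv, le_refl v⟩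
  intro x hx x' hx'
  rcases le_total x x' with hle | hle
  · exact (key x x' hx hx' hle).symm
  · exact key x' x hx' hx hle

lemma shrink {F : ℝ → ℝ} {a b x₀ : ℝ} (hx₀ : x₀ ∈ Ioo a b)
    (hF : ContinuousAt F x₀) (hne : F x₀ ≠ 0) :
    ∃ a' b', a' < x₀ ∧ x₀ < b' ∧ Ioo a' b' ⊆ Ioo a b ∧ ∀ x ∈ Ioo a' b', F x ≠ 0 := by
  have hev : ∀ᶠ x in nhds x₀, F x ≠ 0 := hF.eventually_ne hne
  rw [Metric.eventually_nhds_iff_ball] at hev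
  obtain ⟨ε, hε, hball⟩ := hev
  set δ := min ε (min (x₀ - a) (b - x₀)) with hδ
  have hδ0 : 0 < δ := lt_min hε (lt_min (by linarith [hx₀.1]) (by linarith [hx₀.2]))
  refine ⟨x₀ - δ, x₀ + δ, by linarith, by linarith, ?_, ?_⟩
  · intro x hx
    have h1 : δ ≤ x₀ - a := le_trans (min_le_right _ _) (min_le_left _ _)
    have h2 : δ ≤ b - x₀ := le_trans (min_le_right _ _) (min_le_right _ _)
    exact ⟨by linarith [hx.1], by linarith [hx.2]⟩
  · intro x hx
    apply hball
    rw [Metric.mem_ball, Real.dist_eq, abs_lt]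
    have : δ ≤ ε := min_le_left _ _
    constructor <;> [linarith [hx.1]; linarith [hx.2]]

lemma EderivY {m₀ : ℝ} {g g1 g2 : ℝ → ℝ} {y w3 : ℝ}
    (hd1 : HasDerivAt g (g1 y) y) (hd2 : HasDerivAt g1 (g2 y) y)
    (hd3 : HasDerivAt g2 w3 y) (A B C D : ℝ) :
    HasDerivAt (fun y => m₀ * (A * g y + B * g2 y) + C * (g2 y * g y) - D * g1 y ^ 2)
      (m₀ * (A * g1 y + B * w3) + C * (w3 * g y + g2 y * g1 y)
        - D * (2 * g1 y * g2 y)) y := by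
  have t1 : HasDerivAt (fun y => m₀ * (A * g y + B * g2 y))
      (m₀ * (A * g1 y + B * w3)) y :=
    (((hd1).const_mul A).add ((hd3).const_mul B)).const_mul m₀
  have t2 : HasDerivAt (fun y => C * (g2 y * g y)) (C * (w3 * g y + g2 y * g1 y)) y :=
    ((hd3).mul (hd1)).const_mul C
  have t3 : HasDerivAt (fun y => D * g1 y ^ 2) (D * (2 * g1 y * g2 y)) y := by
    have := ((hd2).fun_pow 2).const_mul D
    exact this.congr_deriv (by ring)
  exact (t1.add t2).sub t3

lemma EderivX {m₀ : ℝ} {f f1 f2 : ℝ → ℝ} {x w3 : ℝ}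
    (hd1 : HasDerivAt f (f1 x) x) (hd2 : HasDerivAt f1 (f2 x) x)
    (hd3 : HasDerivAt f2 w3 x) (G0 G2 Gq : ℝ) :
    HasDerivAt (fun x => m₀ * (f2 x * G0 + f x * G2) + (f2 x * f x) * (G2 * G0) - f1 x ^ 2 * Gq)
      (m₀ * (w3 * G0 + f1 x * G2) + (w3 * f x + f2 x * f1 x) * (G2 * G0)
        - 2 * f1 x * f2 x * Gq) x := by
  have t1 : HasDerivAt (fun x => m₀ * (f2 x * G0 + f x * G2))
      (m₀ * (w3 * G0 + f1 x * G2)) x :=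
    (((hd3).mul_const G0).add ((hd1).mul_const G2)).const_mul m₀
  have t2 : HasDerivAt (fun x => (f2 x * f x) * (G2 * G0))
      ((w3 * f x + f2 x * f1 x) * (G2 * G0)) x :=
    ((hd3).mul (hd1)).mul_const (G2 * G0)
  have t3 : HasDerivAt (fun x => f1 x ^ 2 * Gq) (2 * f1 x * f2 x * Gq) x := by
    have := ((hd2).fun_pow 2).mul_const Gq
    exact this.congr_deriv (by ring)
  exact (t1.add t2).sub t3

lemma finishLem (m₀ n₀ a b c d : ℝ) (hm₀ : m₀ ≠ 0) (hab : a < b) (hcd : c < d)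
    (f f1 f2 g g1 g2 g3 : ℝ → ℝ)
    (hgd1 : ∀ y, HasDerivAt g (g1 y) y) (hgd2 : ∀ y, HasDerivAt g1 (g2 y) y)
    (hgd3 : ∀ y, HasDerivAt g2 (g3 y) y)
    (hE : ∀ x ∈ Ioo a b, ∀ y ∈ Ioo c d,
      m₀ * (f2 x * g y + f x * g2 y) + (f2 x * f x) * (g2 y * g y) - f1 x ^ 2 * g1 y ^ 2 = n₀)
    (hg2 : ∀ y ∈ Ioo c d, g2 y = 0) :
    ∃ K₀ H₀ : ℝ, ∀ x ∈ Ioo a b, ∀ y ∈ Ioo c d,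
      (f2 x * f x) * (g2 y * g y) - f1 x ^ 2 * g1 y ^ 2 = K₀ ∧
      (f2 x * g y + f x * g2 y) / 2 = H₀ := by
  have hym : (c + d) / 2 ∈ Ioo c d := ⟨by linarith, by linarith⟩
  have hg1c : ∀ y ∈ Ioo c d, g1 y = g1 ((c + d) / 2) := fun y hy => constOn hgd2 hg2 y hy _ hym
  have hg3 : ∀ y ∈ Ioo c d, g3 y = 0 := fun y hy => derivZero isOpen_Ioo hg2 hy (hgd3 y)
  by_cases hα : g1 ((c + d) / 2) = 0
  · have hg1z : ∀ y ∈ Ioo c d, g1 y = 0 := fun y hy => (hg1c y hy).trans hα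
    have hgc : ∀ y ∈ Ioo c d, g y = g ((c + d) / 2) := fun y hy => constOn hgd1 hg1z y hy _ hym
    refine ⟨0, n₀ / (2 * m₀), fun x hx y hy => ?_⟩
    have e := hE x hx y hy
    rw [hg2 y hy, hg1z y hy] at e
    constructor
    · rw [hg2 y hy, hg1z y hy]; ring
    · rw [hg2 y hy]
      field_simp
      linear_combination e
  · -- α ≠ 0 : show f2 ≡ 0
    have hf2z : ∀ x ∈ Ioo a b, f2 x = 0 := by
      intro x hx
      have hD := EderivY (m₀ := m₀) (hgd1 ((c + d) / 2)) (hgd2 ((c + d) / 2))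
        (hgd3 ((c + d) / 2)) (f2 x) (f x) (f2 x * f x) (f1 x ^ 2)
      have hz := derivZero isOpen_Ioo (hE x hx) hym (hD)
      rw [hg2 _ hym, hg3 _ hym] at hz
      have hα' := hα
      have : m₀ * (f2 x * g1 ((c + d) / 2)) = 0 := by linear_combination hz
      rcases mul_eq_zero.mp this with h | h
      · exact absurd h hm₀
      · rcases mul_eq_zero.mp h with h' | h'
        · exact h'
        · exact absurd h' hα
    refine ⟨n₀, 0, fun x hx y hy => ?_⟩
    have e := hE x hx y hy
    rw [hg2 y hy, hf2z x hx] at e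
    constructor
    · rw [hg2 y hy, hf2z x hx]; linear_combination e
    · rw [hg2 y hy, hf2z x hx]; ring

lemma quadCase (m₀ n₀ a b c d k : ℝ) (hm₀ : m₀ ≠ 0) (hab : a < b) (hcd : c < d) (hk : k ≠ 0)
    (f f1 f2 g g1 g2 g3 : ℝ → ℝ)
    (hfd1 : ∀ x, HasDerivAt f (f1 x) x) (hfd2 : ∀ x, HasDerivAt f1 (f2 x) x)
    (hgd1 : ∀ y, HasDerivAt g (g1 y) y) (hgd2 : ∀ y, HasDerivAt g1 (g2 y) y)
    (hgd3 : ∀ y, HasDerivAt g2 (g3 y) y)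
    (hE : ∀ x ∈ Ioo a b, ∀ y ∈ Ioo c d,
      m₀ * (f2 x * g y + f x * g2 y) + (f2 x * f x) * (g2 y * g y) - f1 x ^ 2 * g1 y ^ 2 = n₀)
    (hf1 : ∀ x ∈ Ioo a b, f1 x ≠ 0) (hf2k : ∀ x ∈ Ioo a b, f2 x = k)
    (hg1 : ∀ y ∈ Ioo c d, g1 y ≠ 0) (hg2 : ∀ y ∈ Ioo c d, g2 y ≠ 0) : False := by
  have hxm : (a + b) / 2 ∈ Ioo a b := ⟨by linarith, by linarith⟩
  have hym : (c + d) / 2 ∈ Ioo c d := ⟨by linarith, by linarith⟩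
  set xm := (a + b) / 2
  set ym := (c + d) / 2
  -- E_x with f3 = 0
  have hEx : ∀ x ∈ Ioo a b, ∀ y ∈ Ioo c d,
      m₀ * (f1 x * g2 y) + (k * f1 x) * (g2 y * g y) - 2 * f1 x * k * g1 y ^ 2 = 0 := by
    intro x hx y hy
    have hd3 : HasDerivAt f2 0 x := hasDerivAtConstOn isOpen_Ioo hf2k hx
    have hz := derivZero isOpen_Ioo (fun z hz => hE z hz y hy) hx
      (EderivX (hfd1 x) (hfd2 x) hd3 (g y) (g2 y) (g1 y ^ 2))
    rw [hf2k x hx] at hz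
    linear_combination hz
  -- (‡)
  have hdag : ∀ y ∈ Ioo c d, m₀ * g2 y + k * (g2 y * g y) - 2 * k * g1 y ^ 2 = 0 := by
    intro y hy
    have e := hEx xm hxm y hy
    have h2 : f1 xm * (m₀ * g2 y + k * (g2 y * g y) - 2 * k * g1 y ^ 2) = 0 := by
      linear_combination e
    exact (mul_eq_zero.mp h2).resolve_left (hf1 xm hxm)
  -- (†)
  have hstar : ∀ x ∈ Ioo a b, ∀ y ∈ Ioo c d,
      m₀ * k * g y + (2 * k * f x - f1 x ^ 2) * g1 y ^ 2 = n₀ := by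
    intro x hx y hy
    have e := hE x hx y hy
    rw [hf2k x hx] at e
    linear_combination e - f x * hdag y hy
  -- s constant
  set s := 2 * k * f xm - f1 xm ^ 2 with hs_def
  have hs : ∀ x ∈ Ioo a b, 2 * k * f x - f1 x ^ 2 = s := by
    intro x hx
    have e1 := hstar x hx ym hym
    have e2 := hstar xm hxm ym hym
    have h2 : (2 * k * f x - f1 x ^ 2 - s) * g1 ym ^ 2 = 0 := by linear_combination e1 - e2
    have := (mul_eq_zero.mp h2).resolve_right (pow_ne_zero 2 (hg1 ym hym))
    linarith
  -- (†')
  have hstar' : ∀ y ∈ Ioo c d, m₀ * (k * g y + 0 * g2 y) + 0 * (g2 y * g y) - -s * g1 y ^ 2 = n₀ := by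
    intro y hy
    have := hstar xm hxm y hy
    linear_combination this
  -- differentiate (†')
  have step4 : ∀ y ∈ Ioo c d, m₀ * k + 2 * s * g2 y = 0 := by
    intro y hy
    have hz := derivZero isOpen_Ioo hstar' hy
      (EderivY (hgd1 y) (hgd2 y) (hgd3 y) k 0 0 (-s))
    have h2 : g1 y * (m₀ * k + 2 * s * g2 y) = 0 := by linear_combination hz
    exact (mul_eq_zero.mp h2).resolve_left (hg1 y hy)
  have hs0 : s ≠ 0 := by
    intro h
    have := step4 ym hym
    rw [h] at this
    exact hm₀ (by rcases mul_eq_zero.mp (by linarith : m₀ * k = 0) with h' | h' <;>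
      [exact h'; exact absurd h' hk])
  set lam := g2 ym with hlam_def
  have hg2c : ∀ y ∈ Ioo c d, g2 y = lam := by
    intro y hy
    have e1 := step4 y hy
    have e2 := step4 ym hym
    have : 2 * s * (g2 y - lam) = 0 := by linear_combination e1 - e2
    rcases mul_eq_zero.mp this with h | h
    · exact absurd (by rcases mul_eq_zero.mp h with h' | h' <;> [norm_num at h'; exact h']) hs0
    · linarith
  have hlam : lam ≠ 0 := hg2 ym hym
  have hg3z : ∀ y ∈ Ioo c d, g3 y = 0 := fun y hy => derivZero isOpen_Ioo hg2c hy (hgd3 y)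
  -- differentiate (‡)
  have hdag' : ∀ y ∈ Ioo c d,
      m₀ * (0 * g y + 1 * g2 y) + k * (g2 y * g y) - 2 * k * g1 y ^ 2 = 0 := by
    intro y hy; linear_combination hdag y hy
  have step6 := derivZero isOpen_Ioo hdag' hym
    (EderivY (hgd1 ym) (hgd2 ym) (hgd3 ym) 0 1 k (2 * k))
  rw [hg3z ym hym, hg2c ym hym] at step6
  have h2 : k * lam * g1 ym = 0 := by linear_combination (-1/3) * step6
  rcases mul_eq_zero.mp h2 with h | h
  · rcases mul_eq_zero.mp h with h' | h'
    · exact hk h'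
    · exact hlam h'
  · exact hg1 ym hym h

lemma sideLem (m₀ a1 b1 κ σ σt c₁ : ℝ) (hm₀ : m₀ ≠ 0) (hab : a1 < b1) (hκ : κ ≠ 0)
    (f f1 f2 f3 : ℝ → ℝ)
    (hfd1 : ∀ x, HasDerivAt f (f1 x) x) (hfd2 : ∀ x, HasDerivAt f1 (f2 x) x)
    (hfd3 : ∀ x, HasDerivAt f2 (f3 x) x)
    (hf1 : ∀ x ∈ Ioo a1 b1, f1 x ≠ 0)
    (hdens : ¬ ∃ u v, a1 < u ∧ u < v ∧ v < b1 ∧ ∀ x ∈ Ioo u v, f3 x = 0)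
    (hO1 : ∀ x ∈ Ioo a1 b1, m₀ * f3 x = f1 x * (c₁ - σt * f2 x))
    (hO2 : ∀ x ∈ Ioo a1 b1, κ * (f3 x * f x) = (σ + (4 - κ) * f2 x) * f1 x) :
    σt = 0 ∧ κ = 2 ∧ c₁ ≠ 0 := by
  have hxm : (a1 + b1) / 2 ∈ Ioo a1 b1 := ⟨by linarith, by linarith⟩
  -- trisection witnesses for density contradictions
  have htri : ∀ (h3 : ∀ x ∈ Ioo a1 b1, f3 x = 0), False := by
    intro h3
    refine hdens ⟨a1 + (b1 - a1) / 3, b1 - (b1 - a1) / 3, by linarith, by linarith, by linarith,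
      fun x hx => h3 x ⟨by linarith [hx.1], by linarith [hx.2]⟩⟩
  -- O3
  have hO3 : ∀ x ∈ Ioo a1 b1,
      κ * f x * (c₁ - σt * f2 x) - (m₀ * σ + m₀ * (4 - κ) * f2 x) = 0 := by
    intro x hx
    have h2 : f1 x * (κ * f x * (c₁ - σt * f2 x) - (m₀ * σ + m₀ * (4 - κ) * f2 x)) = 0 := by
      linear_combination m₀ * (hO2 x hx) - κ * f x * (hO1 x hx)
    exact (mul_eq_zero.mp h2).resolve_left (hf1 x hx)
  -- derivative of O3
  have key : ∀ x ∈ Ioo a1 b1,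
      (c₁ - σt * f2 x) * ((2 * κ - 4) * m₀ - κ * σt * f x) = 0 := by
    intro x hx
    have t1 : HasDerivAt (fun x => κ * (f x * (c₁ - σt * f2 x)))
        (κ * (f1 x * (c₁ - σt * f2 x) + f x * (-(σt * f3 x)))) x :=
      ((hfd1 x).mul (((hfd3 x).const_mul σt).const_sub c₁)).const_mul κ
    have t2 : HasDerivAt (fun x => m₀ * σ + m₀ * (4 - κ) * f2 x)
        (m₀ * (4 - κ) * f3 x) x :=
      ((hfd3 x).const_mul (m₀ * (4 - κ))).const_add (m₀ * σ)
    have tW : HasDerivAt (fun x => κ * (f x * (c₁ - σt * f2 x)) - (m₀ * σ + m₀ * (4 - κ) * f2 x))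
        (κ * (f1 x * (c₁ - σt * f2 x) + f x * (-(σt * f3 x))) - m₀ * (4 - κ) * f3 x) x :=
      t1.sub t2
    have hV := derivZero isOpen_Ioo (k := 0)
      (fun z hz => by linear_combination hO3 z hz) hx tW
    have h2 : f1 x * ((c₁ - σt * f2 x) * ((2 * κ - 4) * m₀ - κ * σt * f x)) = 0 := by
      linear_combination m₀ * hV + (κ * σt * f x + (4 - κ) * m₀) * (hO1 x hx)
    exact (mul_eq_zero.mp h2).resolve_left (hf1 x hx)
  by_cases hσt : σt = 0
  · by_cases hc₁ : c₁ = 0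
    · exfalso
      apply htri
      intro x hx
      have := hO1 x hx
      rw [hσt, hc₁] at this
      have : m₀ * f3 x = 0 := by linear_combination this
      exact (mul_eq_zero.mp this).resolve_left hm₀
    · have hk := key ((a1 + b1) / 2) hxm
      rw [hσt] at hk
      have h2 : c₁ * ((2 * κ - 4) * m₀) = 0 := by linear_combination hk
      have h3 : (2 * κ - 4) * m₀ = 0 := (mul_eq_zero.mp h2).resolve_left hc₁
      have h4 : κ = 2 := by
        rcases mul_eq_zero.mp h3 with h | h
        · linarith
        · exact absurd h hm₀
      exact ⟨hσt, h4, hc₁⟩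
  · exfalso
    by_cases hT : ∀ x ∈ Ioo a1 b1, c₁ - σt * f2 x = 0
    · -- f2 constant ⇒ f3 ≡ 0
      apply htri
      intro x hx
      have hf2c : ∀ z ∈ Ioo a1 b1, f2 z = c₁ / σt := by
        intro z hz
        have := hT z hz
        field_simp
        linarith
      exact derivZero isOpen_Ioo hf2c hx (hfd3 x)
    · push_neg at hT
      obtain ⟨x₃, hx₃, hTx₃⟩ := hT
      have hcont : ContinuousAt (fun x => c₁ - σt * f2 x) x₃ :=
        continuousAt_const.sub (continuousAt_const.mul ((hfd3 x₃).differentiableAt.continuousAt))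
      obtain ⟨a', b', ha', hb', hsub, hne⟩ := shrink hx₃ hcont hTx₃
      have hfc : ∀ x ∈ Ioo a' b', f x = f x₃ := by
        intro x hx
        have k1 := (key x (hsub hx))
        have k2 := (key x₃ (hsub ⟨ha', hb'⟩))
        have e1 : (2 * κ - 4) * m₀ - κ * σt * f x = 0 :=
          (mul_eq_zero.mp k1).resolve_left (hne x hx)
        have e2 : (2 * κ - 4) * m₀ - κ * σt * f x₃ = 0 :=
          (mul_eq_zero.mp k2).resolve_left (hne x₃ ⟨ha', hb'⟩)
        have h3 : κ * σt * (f x - f x₃) = 0 := by linear_combination e2 - e1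
        rcases mul_eq_zero.mp h3 with h | h
        · rcases mul_eq_zero.mp h with h' | h'
          · exact absurd h' hκ
          · exact absurd h' hσt
        · linarith
      have h0 : HasDerivAt f 0 x₃ := hasDerivAtConstOn isOpen_Ioo hfc ⟨ha', hb'⟩
      exact hf1 x₃ hx₃ ((hfd1 x₃).unique h0)

lemma noMixCore (m₀ n₀ a1 b1 c1 d1 : ℝ) (hm₀ : m₀ ≠ 0) (hab : a1 < b1) (hcd : c1 < d1)
    (f f1 f2 f3 f4 g g1 g2 g3 g4 : ℝ → ℝ)
    (hfd1 : ∀ x, HasDerivAt f (f1 x) x) (hfd2 : ∀ x, HasDerivAt f1 (f2 x) x)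
    (hfd3 : ∀ x, HasDerivAt f2 (f3 x) x) (hfd4 : ∀ x, HasDerivAt f3 (f4 x) x)
    (hgd1 : ∀ y, HasDerivAt g (g1 y) y) (hgd2 : ∀ y, HasDerivAt g1 (g2 y) y)
    (hgd3 : ∀ y, HasDerivAt g2 (g3 y) y) (hgd4 : ∀ y, HasDerivAt g3 (g4 y) y)
    (hE : ∀ x ∈ Ioo a1 b1, ∀ y ∈ Ioo c1 d1,
      m₀ * (f2 x * g y + f x * g2 y) + (f2 x * f x) * (g2 y * g y) - f1 x ^ 2 * g1 y ^ 2 = n₀)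
    (hf1ne : ∀ x ∈ Ioo a1 b1, f1 x ≠ 0) (hg1ne : ∀ y ∈ Ioo c1 d1, g1 y ≠ 0)
    (hdensf : ¬ ∃ u v, a1 < u ∧ u < v ∧ v < b1 ∧ ∀ x ∈ Ioo u v, f3 x = 0)
    (hdensg : ¬ ∃ u v, c1 < u ∧ u < v ∧ v < d1 ∧ ∀ y ∈ Ioo u v, g3 y = 0) : False := by
  -- points with nonzero third derivative
  obtain ⟨x₂, hx₂, hf3x₂⟩ : ∃ x₂ ∈ Ioo a1 b1, f3 x₂ ≠ 0 := by
    by_contra h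
    push_neg at h
    exact hdensf ⟨a1 + (b1 - a1) / 3, b1 - (b1 - a1) / 3, by linarith, by linarith, by linarith,
      fun x hx => h x ⟨by linarith [hx.1], by linarith [hx.2]⟩⟩
  obtain ⟨y₂, hy₂, hg3y₂⟩ : ∃ y₂ ∈ Ioo c1 d1, g3 y₂ ≠ 0 := by
    by_contra h
    push_neg at h
    exact hdensg ⟨c1 + (d1 - c1) / 3, d1 - (d1 - c1) / 3, by linarith, by linarith, by linarith,
      fun y hy => h y ⟨by linarith [hy.1], by linarith [hy.2]⟩⟩
  -- E_x
  have hEx : ∀ x ∈ Ioo a1 b1, ∀ y ∈ Ioo c1 d1,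
      m₀ * (f3 x * g y + f1 x * g2 y) + (f3 x * f x + f2 x * f1 x) * (g2 y * g y)
        - 2 * f1 x * f2 x * g1 y ^ 2 = 0 := by
    intro x hx y hy
    exact derivZero isOpen_Ioo (fun z hz => hE z hz y hy) hx
      (EderivX (hfd1 x) (hfd2 x) (hfd3 x) (g y) (g2 y) (g1 y ^ 2))
  -- E_xy
  have hExy : ∀ x ∈ Ioo a1 b1, ∀ y ∈ Ioo c1 d1,
      m₀ * (f3 x * g1 y + f1 x * g3 y) +
        (f3 x * f x + f2 x * f1 x) * (g3 y * g y + g2 y * g1 y)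
        - 2 * f1 x * f2 x * (2 * g1 y * g2 y) = 0 := by
    intro x hx y hy
    exact derivZero isOpen_Ioo (fun z hz => hEx x hx z hz) hy
      (EderivY (hgd1 y) (hgd2 y) (hgd3 y) (f3 x) (f1 x) (f3 x * f x + f2 x * f1 x)
        (2 * f1 x * f2 x))
  -- abstract quotient functions
  obtain ⟨P, hPdef, hPd⟩ : ∃ P : ℝ → ℝ, (∀ x ∈ Ioo a1 b1, f1 x * P x = f3 x) ∧
      (∀ x ∈ Ioo a1 b1, HasDerivAt P (deriv P x) x) := by
    refine ⟨fun x => f3 x / f1 x, fun x hx => ?_, fun x hx => ?_⟩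
    · field_simp [hf1ne x hx]
    · exact (((hfd4 x).differentiableAt).div ((hfd2 x).differentiableAt)
        (hf1ne x hx)).hasDerivAt
  obtain ⟨Q, hQdef, hQd⟩ : ∃ Q : ℝ → ℝ,
      (∀ x ∈ Ioo a1 b1, f1 x * Q x = f3 x * f x + f2 x * f1 x) ∧
      (∀ x ∈ Ioo a1 b1, HasDerivAt Q (deriv Q x) x) := by
    refine ⟨fun x => (f3 x * f x) / f1 x + f2 x, fun x hx => ?_, fun x hx => ?_⟩
    · field_simp [hf1ne x hx]
    · exact ((((hfd4 x).differentiableAt.mul (hfd1 x).differentiableAt).div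
        ((hfd2 x).differentiableAt) (hf1ne x hx)).add
        ((hfd3 x).differentiableAt)).hasDerivAt
  obtain ⟨Pt, hPtdef, hPtd⟩ : ∃ Pt : ℝ → ℝ, (∀ y ∈ Ioo c1 d1, g1 y * Pt y = g3 y) ∧
      (∀ y ∈ Ioo c1 d1, HasDerivAt Pt (deriv Pt y) y) := by
    refine ⟨fun y => g3 y / g1 y, fun y hy => ?_, fun y hy => ?_⟩
    · field_simp [hg1ne y hy]
    · exact (((hgd4 y).differentiableAt).div ((hgd2 y).differentiableAt)
        (hg1ne y hy)).hasDerivAt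
  obtain ⟨Qt, hQtdef, hQtd⟩ : ∃ Qt : ℝ → ℝ,
      (∀ y ∈ Ioo c1 d1, g1 y * Qt y = g3 y * g y + g2 y * g1 y) ∧
      (∀ y ∈ Ioo c1 d1, HasDerivAt Qt (deriv Qt y) y) := by
    refine ⟨fun y => (g3 y * g y) / g1 y + g2 y, fun y hy => ?_, fun y hy => ?_⟩
    · field_simp [hg1ne y hy]
    · exact ((((hgd4 y).differentiableAt.mul (hgd1 y).differentiableAt).div
        ((hgd2 y).differentiableAt) (hg1ne y hy)).add
        ((hgd3 y).differentiableAt)).hasDerivAt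
  -- (C)
  have hC : ∀ x ∈ Ioo a1 b1, ∀ y ∈ Ioo c1 d1,
      m₀ * (P x + Pt y) + Q x * Qt y - 4 * (f2 x * g2 y) = 0 := by
    intro x hx y hy
    have h2 : f1 x * g1 y * (m₀ * (P x + Pt y) + Q x * Qt y - 4 * (f2 x * g2 y)) = 0 := by
      linear_combination hExy x hx y hy + m₀ * g1 y * hPdef x hx +
        m₀ * f1 x * hPtdef y hy + g1 y * Qt y * hQdef x hx +
        (f3 x * f x + f2 x * f1 x) * hQtdef y hy
    rcases mul_eq_zero.mp h2 with h | h
    · rcases mul_eq_zero.mp h with h' | h'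
      · exact absurd h' (hf1ne x hx)
      · exact absurd h' (hg1ne y hy)
    · exact h
  -- (D): y-derivative of C
  have hD : ∀ x ∈ Ioo a1 b1, ∀ y ∈ Ioo c1 d1,
      m₀ * (0 + deriv Pt y) + Q x * deriv Qt y - 4 * (f2 x * g3 y) = 0 := by
    intro x hx y hy
    have t1 : HasDerivAt (fun y => m₀ * (P x + Pt y)) (m₀ * (0 + deriv Pt y)) y := by
      have := ((hPtd y hy).const_add (P x)).const_mul m₀
      exact this.congr_deriv (by ring)
    have t2 : HasDerivAt (fun y => Q x * Qt y) (Q x * deriv Qt y) y :=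
      (hQtd y hy).const_mul (Q x)
    have t3 : HasDerivAt (fun y => 4 * (f2 x * g2 y)) (4 * (f2 x * g3 y)) y :=
      ((hgd3 y).const_mul (f2 x)).const_mul 4
    exact derivZero isOpen_Ioo (k := 0) (fun z hz => hC x hx z hz) hy ((t1.add t2).sub t3)
  -- (Dt): x-derivative of C
  have hDt : ∀ x ∈ Ioo a1 b1, ∀ y ∈ Ioo c1 d1,
      m₀ * (deriv P x + 0) + deriv Q x * Qt y - 4 * (f3 x * g2 y) = 0 := by
    intro x hx y hy
    have t1 : HasDerivAt (fun x => m₀ * (P x + Pt y)) (m₀ * (deriv P x + 0)) x := by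
      have := ((hPd x hx).add_const (Pt y)).const_mul m₀
      exact this.congr_deriv (by ring)
    have t2 : HasDerivAt (fun x => Q x * Qt y) (deriv Q x * Qt y) x :=
      (hQd x hx).mul_const (Qt y)
    have t3 : HasDerivAt (fun x => 4 * (f2 x * g2 y)) (4 * (f3 x * g2 y)) x :=
      ((hfd3 x).mul_const (g2 y)).const_mul 4
    exact derivZero isOpen_Ioo (k := 0) (fun z hz => hC z hz y hy) hx ((t1.add t2).sub t3)
  -- (E2): x-derivative of D
  have hE2 : ∀ x ∈ Ioo a1 b1, ∀ y ∈ Ioo c1 d1,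
      deriv Q x * deriv Qt y - 4 * (f3 x * g3 y) = 0 := by
    intro x hx y hy
    have t2 : HasDerivAt (fun x => m₀ * (0 + deriv Pt y) + Q x * deriv Qt y)
        (deriv Q x * deriv Qt y) x := by
      have := ((hQd x hx).mul_const (deriv Qt y)).const_add (m₀ * (0 + deriv Pt y))
      convert this using 1
    have t3 : HasDerivAt (fun x => 4 * (f2 x * g3 y)) (4 * (f3 x * g3 y)) x :=
      ((hfd3 x).mul_const (g3 y)).const_mul 4
    exact derivZero isOpen_Ioo (k := 0) (fun z hz => hD z hz y hy) hx (t2.sub t3)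
  -- kappa
  have hdQ : deriv Q x₂ ≠ 0 := by
    intro h0
    apply hdensg
    refine ⟨c1 + (d1 - c1) / 3, d1 - (d1 - c1) / 3, by linarith, by linarith, by linarith,
      fun y hy => ?_⟩
    have hyJ : y ∈ Ioo c1 d1 := ⟨by linarith [hy.1], by linarith [hy.2]⟩
    have := hE2 x₂ hx₂ y hyJ
    rw [h0] at this
    have h4 : f3 x₂ * g3 y = 0 := by linarith
    exact (mul_eq_zero.mp h4).resolve_left hf3x₂
  set κ := 4 * f3 x₂ / deriv Q x₂ with hκdef
  have hκ : κ ≠ 0 := div_ne_zero (mul_ne_zero (by norm_num) hf3x₂) hdQ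
  have hQt' : ∀ y ∈ Ioo c1 d1, deriv Qt y = κ * g3 y := by
    intro y hy
    have h := hE2 x₂ hx₂ y hy
    have h2 : deriv Q x₂ * deriv Qt y = deriv Q x₂ * (κ * g3 y) := by
      rw [hκdef]
      field_simp
      linear_combination h
    exact mul_left_cancel₀ hdQ h2
  have hQ' : ∀ x ∈ Ioo a1 b1, κ * deriv Q x = 4 * f3 x := by
    intro x hx
    have h := hE2 x hx y₂ hy₂
    rw [hQt' y₂ hy₂] at h
    have h2 : g3 y₂ * (κ * deriv Q x - 4 * f3 x) = 0 := by linear_combination h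
    have := (mul_eq_zero.mp h2).resolve_left hg3y₂
    linarith
  -- sigma
  set σ := κ * Q x₂ - 4 * f2 x₂ with hσdef
  have hσ : ∀ x ∈ Ioo a1 b1, κ * Q x - 4 * f2 x = σ := by
    intro x hx
    have h1 := hD x hx y₂ hy₂
    have h2 := hD x₂ hx₂ y₂ hy₂
    rw [hQt' y₂ hy₂] at h1 h2
    have h3 : g3 y₂ * ((κ * Q x - 4 * f2 x) - (κ * Q x₂ - 4 * f2 x₂)) = 0 := by
      linear_combination h1 - h2
    have := (mul_eq_zero.mp h3).resolve_left hg3y₂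
    rw [hσdef]; linarith
  -- kappa-tilde and sigma-tilde
  set κt := 4 / κ with hκtdef
  have hκt : κt ≠ 0 := div_ne_zero (by norm_num) hκ
  have hκκt : κ * κt = 4 := by rw [hκtdef]; field_simp
  have hQt2 : ∀ y ∈ Ioo c1 d1, Qt y - Qt y₂ = κ * (g2 y - g2 y₂) := by
    intro y hy
    have h9 : f3 x₂ * (4 * ((Qt y - Qt y₂) - κ * (g2 y - g2 y₂))) = 0 := by
      linear_combination κ * (hDt x₂ hx₂ y hy) - κ * (hDt x₂ hx₂ y₂ hy₂) -
        (Qt y - Qt y₂) * (hQ' x₂ hx₂)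
    have := (mul_eq_zero.mp h9).resolve_left hf3x₂
    linarith
  set σt := κt * Qt y₂ - 4 * g2 y₂ with hσtdef
  have hσt : ∀ y ∈ Ioo c1 d1, κt * Qt y - 4 * g2 y = σt := by
    intro y hy
    rw [hσtdef]
    linear_combination κt * (hQt2 y hy) + (g2 y - g2 y₂) * hκκt
  -- joint identity
  have hJ : ∀ x ∈ Ioo a1 b1, ∀ y ∈ Ioo c1 d1,
      m₀ * P x + σt * f2 x + m₀ * Pt y + σ * g2 y + σ * σt / 4 = 0 := by
    intro x hx y hy
    have e1 : κ * Q x - 4 * f2 x - σ = 0 := by linear_combination hσ x hx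
    have e2 : κt * Qt y - 4 * g2 y - σt = 0 := by linear_combination hσt y hy
    have e3 : κ * κt - 4 = 0 := by linear_combination hκκt
    linear_combination hC x hx y hy - (κt * Qt y / 4) * e1 - (σ / 4 + f2 x) * e2 +
      (Q x * Qt y / 4) * e3
  -- constants
  set c₁ := m₀ * P x₂ + σt * f2 x₂ with hc₁def
  have hc₁ : ∀ x ∈ Ioo a1 b1, m₀ * P x + σt * f2 x = c₁ := by
    intro x hx
    rw [hc₁def]
    linear_combination hJ x hx y₂ hy₂ - hJ x₂ hx₂ y₂ hy₂
  set c₂ := m₀ * Pt y₂ + σ * g2 y₂ with hc₂def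
  have hc₂ : ∀ y ∈ Ioo c1 d1, m₀ * Pt y + σ * g2 y = c₂ := by
    intro y hy
    rw [hc₂def]
    linear_combination hJ x₂ hx₂ y hy - hJ x₂ hx₂ y₂ hy₂
  -- O1, O2 for f
  have hO1f : ∀ x ∈ Ioo a1 b1, m₀ * f3 x = f1 x * (c₁ - σt * f2 x) := by
    intro x hx
    linear_combination f1 x * (hc₁ x hx) - m₀ * (hPdef x hx)
  have hO2f : ∀ x ∈ Ioo a1 b1, κ * (f3 x * f x) = (σ + (4 - κ) * f2 x) * f1 x := by
    intro x hx
    linear_combination f1 x * (hσ x hx) - κ * (hQdef x hx)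
  have hO1g : ∀ y ∈ Ioo c1 d1, m₀ * g3 y = g1 y * (c₂ - σ * g2 y) := by
    intro y hy
    linear_combination g1 y * (hc₂ y hy) - m₀ * (hPtdef y hy)
  have hO2g : ∀ y ∈ Ioo c1 d1, κt * (g3 y * g y) = (σt + (4 - κt) * g2 y) * g1 y := by
    intro y hy
    linear_combination g1 y * (hσt y hy) - κt * (hQtdef y hy)
  obtain ⟨hσt0, hκ2, hc₁0⟩ := sideLem m₀ a1 b1 κ σ σt c₁ hm₀ hab hκ f f1 f2 f3
    hfd1 hfd2 hfd3 hf1ne hdensf hO1f hO2f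
  obtain ⟨hσ0, hκt2, hc₂0⟩ := sideLem m₀ c1 d1 κt σt σ c₂ hm₀ hcd hκt g g1 g2 g3
    hgd1 hgd2 hgd3 hg1ne hdensg hO1g hO2g
  -- f2 = (c₁/m₀) f and g2 = (c₂/m₀) g
  have hfω : ∀ x ∈ Ioo a1 b1, m₀ * f2 x = c₁ * f x := by
    intro x hx
    have h1 := hO2f x hx
    have h2 := hO1f x hx
    have h3 : f1 x * (2 * (c₁ * f x) - 2 * (m₀ * f2 x)) = 0 := by
      linear_combination m₀ * h1 - 2 * f x * h2 - (m₀ * f3 x * f x + m₀ * f2 x * f1 x) * hκ2 +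
        m₀ * f1 x * hσ0 + 2 * f x * f1 x * f2 x * hσt0
    have := (mul_eq_zero.mp h3).resolve_left (hf1ne x hx)
    linarith
  have hgω : ∀ y ∈ Ioo c1 d1, m₀ * g2 y = c₂ * g y := by
    intro y hy
    have h1 := hO2g y hy
    have h2 := hO1g y hy
    have h3 : g1 y * (2 * (c₂ * g y) - 2 * (m₀ * g2 y)) = 0 := by
      linear_combination m₀ * h1 - 2 * g y * h2 - (m₀ * g3 y * g y + m₀ * g2 y * g1 y) * hκt2 +
        m₀ * g1 y * hσt0 + 2 * g y * g1 y * g2 y * hσ0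
    have := (mul_eq_zero.mp h3).resolve_left (hg1ne y hy)
    linarith
  -- conserved quantities
  have hFd : ∀ x, HasDerivAt (fun x => m₀ * f1 x ^ 2 - c₁ * f x ^ 2)
      (2 * f1 x * (m₀ * f2 x - c₁ * f x)) x := by
    intro x
    have := (((hfd2 x).fun_pow 2).const_mul m₀).sub (((hfd1 x).fun_pow 2).const_mul c₁)
    exact this.congr_deriv (by ring)
  have he : ∀ x ∈ Ioo a1 b1, m₀ * f1 x ^ 2 - c₁ * f x ^ 2 = m₀ * f1 x₂ ^ 2 - c₁ * f x₂ ^ 2 :=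
    fun x hx => constOn hFd
      (fun z hz => by linear_combination 2 * f1 z * (hfω z hz)) x hx x₂ hx₂
  have hGd : ∀ y, HasDerivAt (fun y => m₀ * g1 y ^ 2 - c₂ * g y ^ 2)
      (2 * g1 y * (m₀ * g2 y - c₂ * g y)) y := by
    intro y
    have := (((hgd2 y).fun_pow 2).const_mul m₀).sub (((hgd1 y).fun_pow 2).const_mul c₂)
    exact this.congr_deriv (by ring)
  have het : ∀ y ∈ Ioo c1 d1, m₀ * g1 y ^ 2 - c₂ * g y ^ 2 = m₀ * g1 y₂ ^ 2 - c₂ * g y₂ ^ 2 :=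
    fun y hy => constOn hGd
      (fun z hz => by linear_combination 2 * g1 z * (hgω z hz)) y hy y₂ hy₂
  set e := m₀ * f1 x₂ ^ 2 - c₁ * f x₂ ^ 2 with hedef
  set et := m₀ * g1 y₂ ^ 2 - c₂ * g y₂ ^ 2 with hetdef
  -- star identity
  have hstar : ∀ x ∈ Ioo a1 b1, ∀ y ∈ Ioo c1 d1,
      m₀ ^ 2 * (c₁ + c₂) * (f x * g y) - c₁ * et * f x ^ 2 - e * c₂ * g y ^ 2 - e * et
        = m₀ ^ 2 * n₀ := by
    intro x hx y hy
    linear_combination m₀ ^ 2 * (hE x hx y hy) -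
      (m₀ ^ 2 * g y + c₂ * g y * (f x * g y)) * (hfω x hx) -
      (m₀ ^ 2 * f x + f x * g y * (m₀ * f2 x)) * (hgω y hy) +
      m₀ * g1 y ^ 2 * (he x hx) + (c₁ * f x ^ 2 + e) * (het y hy)
  -- x-derivative of star
  have hstar1 : ∀ x ∈ Ioo a1 b1, ∀ y ∈ Ioo c1 d1,
      m₀ ^ 2 * (c₁ + c₂) * g y - 2 * c₁ * et * f x = 0 := by
    intro x hx y hy
    have t1 : HasDerivAt (fun x => m₀ ^ 2 * (c₁ + c₂) * (f x * g y))
        (m₀ ^ 2 * (c₁ + c₂) * (f1 x * g y)) x :=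
      ((hfd1 x).mul_const (g y)).const_mul (m₀ ^ 2 * (c₁ + c₂))
    have t2 : HasDerivAt (fun x => c₁ * et * f x ^ 2) (c₁ * et * (2 * f x * f1 x)) x := by
      have := ((hfd1 x).fun_pow 2).const_mul (c₁ * et)
      exact this.congr_deriv (by ring)
    have tb := ((t1.sub t2).sub (hasDerivAt_const x (e * c₂ * g y ^ 2))).sub
      (hasDerivAt_const x (e * et))
    have hz := derivZero isOpen_Ioo (k := m₀ ^ 2 * n₀) (fun z hz => hstar z hz y hy) hx tb
    have h3 : f1 x * (m₀ ^ 2 * (c₁ + c₂) * g y - 2 * c₁ * et * f x) = 0 := by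
      linear_combination hz
    exact (mul_eq_zero.mp h3).resolve_left (hf1ne x hx)
  -- et = 0
  have het0 : et = 0 := by
    have tb : HasDerivAt (fun x => m₀ ^ 2 * (c₁ + c₂) * g y₂ - 2 * c₁ * et * f x)
        (-(2 * c₁ * et * f1 x₂)) x₂ := by
      exact ((hfd1 x₂).const_mul (2 * c₁ * et)).const_sub (m₀ ^ 2 * (c₁ + c₂) * g y₂)
    have hz := derivZero isOpen_Ioo (k := 0) (fun z hz => hstar1 z hz y₂ hy₂) hx₂ tb
    have h3 : 2 * c₁ * et * f1 x₂ = 0 := by linarith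
    rcases mul_eq_zero.mp h3 with h | h
    · rcases mul_eq_zero.mp h with h' | h'
      · rcases mul_eq_zero.mp h' with h'' | h''
        · norm_num at h''
        · exact absurd h'' hc₁0
      · exact h'
    · exact absurd h (hf1ne x₂ hx₂)
  -- c₁ + c₂ = 0
  have hcc : c₁ + c₂ = 0 := by
    have tb : HasDerivAt (fun y => m₀ ^ 2 * (c₁ + c₂) * g y)
        (m₀ ^ 2 * (c₁ + c₂) * g1 y₂) y₂ := (hgd1 y₂).const_mul (m₀ ^ 2 * (c₁ + c₂))
    have hz := derivZero isOpen_Ioo (k := 0) (fun z hz => by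
      have h5 := hstar1 x₂ hx₂ z hz
      rw [het0] at h5
      linarith) hy₂ tb
    rcases mul_eq_zero.mp hz with h | h
    · rcases mul_eq_zero.mp h with h' | h'
      · exact absurd (pow_eq_zero_iff (by norm_num) |>.mp h') hm₀
      · exact h'
    · exact absurd h (hg1ne y₂ hy₂)
  -- e = 0
  have hred : ∀ y ∈ Ioo c1 d1, -(e * c₂) * g y ^ 2 = m₀ ^ 2 * n₀ := by
    intro y hy
    linear_combination hstar x₂ hx₂ y hy + (c₁ * f x₂ ^ 2 + e) * het0 -
      m₀ ^ 2 * (f x₂ * g y) * (by linarith : c₁ + c₂ - 0 = 0) + 0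
  have he0 : e = 0 := by
    by_contra he0
    have hgz : ∀ y ∈ Ioo c1 d1, g y = 0 := by
      intro y hy
      have tb : HasDerivAt (fun y => -(e * c₂) * g y ^ 2) (-(e * c₂) * (2 * g y * g1 y)) y := by
        have := ((hgd1 y).fun_pow 2).const_mul (-(e * c₂))
        exact this.congr_deriv (by ring)
      have hz := derivZero isOpen_Ioo (k := m₀ ^ 2 * n₀) (hred) hy tb
      have h3 : e * c₂ * (g y * g1 y) = 0 := by linarith
      rcases mul_eq_zero.mp h3 with h | h
      · rcases mul_eq_zero.mp h with h' | h'
        · exact absurd h' he0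
        · exact absurd h' hc₂0
      · exact (mul_eq_zero.mp h).resolve_right (hg1ne y hy)
    have := derivZero isOpen_Ioo (k := 0) hgz hy₂ (hgd1 y₂)
    exact hg1ne y₂ hy₂ this
  -- final contradiction
  have h1 : m₀ * f1 x₂ ^ 2 = c₁ * f x₂ ^ 2 := by
    have := hedef
    rw [he0] at this
    linarith [this.symm]
  have h2 : m₀ * g1 y₂ ^ 2 = c₂ * g y₂ ^ 2 := by
    have := hetdef
    rw [het0] at this
    linarith [this.symm]
  have hc₂c₁ : c₂ = -c₁ := by linarith
  have hkey : (m₀ * (f1 x₂ * g1 y₂)) ^ 2 = -(c₁ ^ 2) * (f x₂ * g y₂) ^ 2 := by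
    have : (m₀ * f1 x₂ ^ 2) * (m₀ * g1 y₂ ^ 2) = (c₁ * f x₂ ^ 2) * (c₂ * g y₂ ^ 2) := by
      rw [h1, h2]
    rw [hc₂c₁] at this
    linear_combination this
  have hne : m₀ * (f1 x₂ * g1 y₂) ≠ 0 :=
    mul_ne_zero hm₀ (mul_ne_zero (hf1ne x₂ hx₂) (hg1ne y₂ hy₂))
  have h5 : 0 < (m₀ * (f1 x₂ * g1 y₂)) ^ 2 := pow_two_pos_of_ne_zero hne
  rw [hkey] at h5
  have h6 : 0 ≤ c₁ ^ 2 * (f x₂ * g y₂) ^ 2 := by positivity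
  linarith

lemma shrink2 {f1 f2 f3 : ℝ → ℝ} {a b x₀ : ℝ} (hx₀ : x₀ ∈ Ioo a b)
    (hfd2 : ∀ x, HasDerivAt f1 (f2 x) x) (hfd3 : ∀ x, HasDerivAt f2 (f3 x) x)
    (hne : f2 x₀ ≠ 0) :
    ∃ a1 b1, a1 < b1 ∧ Ioo a1 b1 ⊆ Ioo a b ∧
      (∀ x ∈ Ioo a1 b1, f1 x ≠ 0) ∧ (∀ x ∈ Ioo a1 b1, f2 x ≠ 0) := by
  obtain ⟨a', b', ha', hb', hsub, hne2⟩ :=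
    shrink hx₀ ((hfd3 x₀).differentiableAt.continuousAt) hne
  by_cases h1 : ∀ x ∈ Ioo a' b', f1 x = 0
  · exact absurd (derivZero isOpen_Ioo h1 ⟨ha', hb'⟩ (hfd2 x₀)) hne
  · push_neg at h1
    obtain ⟨x₁, hx₁, hne1⟩ := h1
    obtain ⟨a1, b1, ha1, hb1, hsub1, hne1'⟩ :=
      shrink hx₁ ((hfd2 x₁).differentiableAt.continuousAt) hne1
    exact ⟨a1, b1, lt_trans ha1 hb1, hsub1.trans hsub, hne1',
      fun x hx => hne2 x (hsub1 hx)⟩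

lemma noMix (m₀ n₀ a b c d : ℝ) (hm₀ : m₀ ≠ 0)
    (f f1 f2 f3 f4 g g1 g2 g3 g4 : ℝ → ℝ)
    (hfd1 : ∀ x, HasDerivAt f (f1 x) x) (hfd2 : ∀ x, HasDerivAt f1 (f2 x) x)
    (hfd3 : ∀ x, HasDerivAt f2 (f3 x) x) (hfd4 : ∀ x, HasDerivAt f3 (f4 x) x)
    (hgd1 : ∀ y, HasDerivAt g (g1 y) y) (hgd2 : ∀ y, HasDerivAt g1 (g2 y) y)
    (hgd3 : ∀ y, HasDerivAt g2 (g3 y) y) (hgd4 : ∀ y, HasDerivAt g3 (g4 y) y)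
    (hE : ∀ x ∈ Ioo a b, ∀ y ∈ Ioo c d,
      m₀ * (f2 x * g y + f x * g2 y) + (f2 x * f x) * (g2 y * g y) - f1 x ^ 2 * g1 y ^ 2 = n₀)
    (x₀ : ℝ) (hx₀ : x₀ ∈ Ioo a b) (hf2x₀ : f2 x₀ ≠ 0)
    (y₀ : ℝ) (hy₀ : y₀ ∈ Ioo c d) (hg2y₀ : g2 y₀ ≠ 0) : False := by
  obtain ⟨a1, b1, hab1, hsubI, hf1ne, hf2ne⟩ := shrink2 hx₀ hfd2 hfd3 hf2x₀
  obtain ⟨c1, d1, hcd1, hsubJ, hg1ne, hg2ne⟩ := shrink2 hy₀ hgd2 hgd3 hg2y₀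
  have hE1 : ∀ x ∈ Ioo a1 b1, ∀ y ∈ Ioo c1 d1,
      m₀ * (f2 x * g y + f x * g2 y) + (f2 x * f x) * (g2 y * g y) - f1 x ^ 2 * g1 y ^ 2 = n₀ :=
    fun x hx y hy => hE x (hsubI hx) y (hsubJ hy)
  by_cases hIq : ∃ u v, a1 < u ∧ u < v ∧ v < b1 ∧ ∀ x ∈ Ioo u v, f3 x = 0
  · obtain ⟨u, v, hu, huv, hv, h3⟩ := hIq
    have hsubuv : Ioo u v ⊆ Ioo a1 b1 := fun x hx =>
      ⟨lt_trans hu hx.1, lt_trans hx.2 hv⟩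
    have hmid : (u + v) / 2 ∈ Ioo u v := ⟨by linarith, by linarith⟩
    have hf2k : ∀ x ∈ Ioo u v, f2 x = f2 ((u + v) / 2) :=
      fun x hx => constOn hfd3 h3 x hx _ hmid
    exact quadCase m₀ n₀ u v c1 d1 (f2 ((u + v) / 2)) hm₀ huv hcd1
      (hf2ne _ (hsubuv hmid)) f f1 f2 g g1 g2 g3 hfd1 hfd2 hgd1 hgd2 hgd3
      (fun x hx y hy => hE1 x (hsubuv hx) y hy)
      (fun x hx => hf1ne x (hsubuv hx)) hf2k hg1ne hg2ne
  by_cases hJq : ∃ u v, c1 < u ∧ u < v ∧ v < d1 ∧ ∀ y ∈ Ioo u v, g3 y = 0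
  · obtain ⟨u, v, hu, huv, hv, h3⟩ := hJq
    have hsubuv : Ioo u v ⊆ Ioo c1 d1 := fun y hy =>
      ⟨lt_trans hu hy.1, lt_trans hy.2 hv⟩
    have hmid : (u + v) / 2 ∈ Ioo u v := ⟨by linarith, by linarith⟩
    have hg2k : ∀ y ∈ Ioo u v, g2 y = g2 ((u + v) / 2) :=
      fun y hy => constOn hgd3 h3 y hy _ hmid
    exact quadCase m₀ n₀ u v a1 b1 (g2 ((u + v) / 2)) hm₀ huv hab1
      (hg2ne _ (hsubuv hmid)) g g1 g2 f f1 f2 f3 hgd1 hgd2 hfd1 hfd2 hfd3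
      (fun y hy x hx => by linear_combination hE1 x hx y (hsubuv hy))
      (fun y hy => hg1ne y (hsubuv hy)) hg2k hf1ne hf2ne
  exact noMixCore m₀ n₀ a1 b1 c1 d1 hm₀ hab1 hcd1 f f1 f2 f3 f4 g g1 g2 g3 g4
    hfd1 hfd2 hfd3 hfd4 hgd1 hgd2 hgd3 hgd4 hE1 hf1ne hg1ne hIq hJq

theorem stmt15 (a b c d m₀ n₀ : ℝ) (hab : a < b) (hcd : c < d) (hm₀ : m₀ ≠ 0)
    (f g : ℝ → ℝ) (hf : ContDiff ℝ (⊤ : ℕ∞) f) (hg : ContDiff ℝ (⊤ : ℕ∞) g)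
    (hW : ∀ x ∈ Set.Ioo a b, ∀ y ∈ Set.Ioo c d,
      2 * m₀ * ((deriv (deriv f) x * g y + f x * deriv (deriv g) y) / 2) +
        ((deriv (deriv f) x * f x) * (deriv (deriv g) y * g y)
          - (deriv f x) ^ 2 * (deriv g y) ^ 2) = n₀) :
    ∃ K₀ H₀ : ℝ, ∀ x ∈ Set.Ioo a b, ∀ y ∈ Set.Ioo c d,
      (deriv (deriv f) x * f x) * (deriv (deriv g) y * g y)
          - (deriv f x) ^ 2 * (deriv g y) ^ 2 = K₀ ∧
        (deriv (deriv f) x * g y + f x * deriv (deriv g) y) / 2 = H₀ := by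
  obtain ⟨hfD, hf1C⟩ := contDiff_infty_iff_deriv.mp (hf.of_le (by simp))
  obtain ⟨hf1D, hf2C⟩ := contDiff_infty_iff_deriv.mp hf1C
  obtain ⟨hf2D, hf3C⟩ := contDiff_infty_iff_deriv.mp hf2C
  obtain ⟨hf3D, _⟩ := contDiff_infty_iff_deriv.mp hf3C
  obtain ⟨hgD, hg1C⟩ := contDiff_infty_iff_deriv.mp (hg.of_le (by simp))
  obtain ⟨hg1D, hg2C⟩ := contDiff_infty_iff_deriv.mp hg1C
  obtain ⟨hg2D, hg3C⟩ := contDiff_infty_iff_deriv.mp hg2C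
  obtain ⟨hg3D, _⟩ := contDiff_infty_iff_deriv.mp hg3C
  have hfd1 : ∀ x, HasDerivAt f (deriv f x) x := fun x => (hfD x).hasDerivAt
  have hfd2 : ∀ x, HasDerivAt (deriv f) (deriv (deriv f) x) x := fun x => (hf1D x).hasDerivAt
  have hfd3 : ∀ x, HasDerivAt (deriv (deriv f)) (deriv (deriv (deriv f)) x) x :=
    fun x => (hf2D x).hasDerivAt
  have hfd4 : ∀ x, HasDerivAt (deriv (deriv (deriv f)))
      (deriv (deriv (deriv (deriv f))) x) x := fun x => (hf3D x).hasDerivAt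
  have hgd1 : ∀ y, HasDerivAt g (deriv g y) y := fun y => (hgD y).hasDerivAt
  have hgd2 : ∀ y, HasDerivAt (deriv g) (deriv (deriv g) y) y := fun y => (hg1D y).hasDerivAt
  have hgd3 : ∀ y, HasDerivAt (deriv (deriv g)) (deriv (deriv (deriv g)) y) y :=
    fun y => (hg2D y).hasDerivAt
  have hgd4 : ∀ y, HasDerivAt (deriv (deriv (deriv g)))
      (deriv (deriv (deriv (deriv g))) y) y := fun y => (hg3D y).hasDerivAt
  have hE : ∀ x ∈ Ioo a b, ∀ y ∈ Ioo c d,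
      m₀ * (deriv (deriv f) x * g y + f x * deriv (deriv g) y) +
        (deriv (deriv f) x * f x) * (deriv (deriv g) y * g y)
        - deriv f x ^ 2 * deriv g y ^ 2 = n₀ :=
    fun x hx y hy => by linear_combination hW x hx y hy
  by_cases hg2z : ∀ y ∈ Ioo c d, deriv (deriv g) y = 0
  · exact finishLem m₀ n₀ a b c d hm₀ hab hcd f (deriv f) (deriv (deriv f))
      g (deriv g) (deriv (deriv g)) (deriv (deriv (deriv g))) hgd1 hgd2 hgd3 hE hg2z
  by_cases hf2z : ∀ x ∈ Ioo a b, deriv (deriv f) x = 0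
  · obtain ⟨K₀, H₀, h⟩ := finishLem m₀ n₀ c d a b hm₀ hcd hab g (deriv g) (deriv (deriv g))
      f (deriv f) (deriv (deriv f)) (deriv (deriv (deriv f))) hfd1 hfd2 hfd3
      (fun y hy x hx => by linear_combination hW x hx y hy) hf2z
    exact ⟨K₀, H₀, fun x hx y hy => ⟨by linear_combination (h y hy x hx).1,
      by linear_combination (h y hy x hx).2⟩⟩
  push_neg at hg2z hf2z
  obtain ⟨x₀, hx₀, hf2x₀⟩ := hf2z
  obtain ⟨y₀, hy₀, hg2y₀⟩ := hg2z
  exact (noMix m₀ n₀ a b c d hm₀ f (deriv f) (deriv (deriv f)) (deriv (deriv (deriv f)))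
    (deriv (deriv (deriv (deriv f)))) g (deriv g) (deriv (deriv g)) (deriv (deriv (deriv g)))
    (deriv (deriv (deriv (deriv g)))) hfd1 hfd2 hfd3 hfd4 hgd1 hgd2 hgd3 hgd4 hE
    x₀ hx₀ hf2x₀ y₀ hy₀ hg2y₀).elim
end
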